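/- arXiv:2308.02981 — 7 statements merged into one kernel-verified Lean document; each statement's English description precedes it below -/
import Mathlib

section
/- For every integer c ≥ 1 there exists a permutation π such that every permutation that is a composition of at most c separable permutations avoids π as a pattern. -/
/-- `π` is a pattern of `σ`: there is a strictly increasing map `f` such that the relative
order of values of `σ` on the image of `f` matches that of `π`. -/
def IsPattern {p m : ℕ} (π : Equiv.Perm (Fin p)) (σ : Equiv.Perm (Fin m)) : Prop :=
  ∃ f : Fin p → Fin m, StrictMono f ∧ ∀ i j : Fin p, π i < π j ↔ σ (f i) < σ (f j)

/-- The permutation 2413 (0-indexed values 1,3,0,2). -/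
def perm2413 : Equiv.Perm (Fin 4) where
  toFun := ![1, 3, 0, 2]
  invFun := ![2, 0, 3, 1]
  left_inv := by intro x; fin_cases x <;> rfl
  right_inv := by intro x; fin_cases x <;> rfl

/-- The permutation 3142 (0-indexed values 2,0,3,1). -/
def perm3142 : Equiv.Perm (Fin 4) where
  toFun := ![2, 0, 3, 1]
  invFun := ![1, 3, 0, 2]
  left_inv := by intro x; fin_cases x <;> rfl
  right_inv := by intro x; fin_cases x <;> rfl

/-- A permutation is separable iff it avoids both 2413 and 3142 as patterns. -/
def Separable {n : ℕ} (σ : Equiv.Perm (Fin n)) : Prop :=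
  ¬ IsPattern perm2413 σ ∧ ¬ IsPattern perm3142 σ

/-!
A pattern of a product `τ₁ ⋯ τ_c` factors as a product of patterns of the `τᵢ`, and patterns of
separable permutations are separable, so the patterns of size `p` of such products lie in `S_p ^ c`,
where `S_p` is the set of separable permutations of `Fin p`. It therefore suffices that
`|S_p| ^ c < p!` for some `p`.

A separable permutation of size at least two is a direct or a skew sum of two smaller ones: by
induction on the size, split the permutation without its last entry and put that entry back; if no
split survives, a 3142 or a 2413 appears. As such a sum is determined by the patterns of its
two blocks, `|S_n| ≤ 2 ∑ |S_t| |S_(n-t)|`, which is the Catalan recursion up to powers of two: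
`|S_(n+1)| ≤ 2 ^ n * catalan n ≤ 8 ^ n`.
-/

open Equiv Finset OrderDual
open scoped Nat Pointwise

theorem Nat.exists_pow_lt_factorial (b : ℕ) : ∃ p, b ^ p < p ! := by
  set a := b ^ 2 + 1
  refine ⟨a + a, ?_⟩
  calc b ^ (a + a) = (b ^ 2) ^ a := by ring
    _ < a ^ a := Nat.pow_lt_pow_left (Nat.lt_add_one _) (by positivity)
    _ ≤ (a + 1) ^ a := Nat.pow_le_pow_left (Nat.le_succ a) a
    _ ≤ a ! * (a + 1) ^ a := Nat.le_mul_of_pos_left _ (Nat.factorial_pos a)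
    _ ≤ (a + a)! := Nat.factorial_mul_pow_le_factorial

theorem Equiv.Perm.eq_of_lt_iff_lt {p : ℕ} {ρ₁ ρ₂ : Perm (Fin p)}
    (h : ∀ i j, ρ₁ i < ρ₁ j ↔ ρ₂ i < ρ₂ j) : ρ₁ = ρ₂ := by
  let e : Fin p ≃o Fin p :=
    ⟨ρ₁.symm.trans ρ₂, fun {a b} => by simpa [not_lt] using (h (ρ₁.symm b) (ρ₁.symm a)).not.symm⟩
  refine Equiv.ext fun x => ?_
  simpa [e] using congr($(Subsingleton.elim e (OrderIso.refl _)) (ρ₁ x)).symm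

section Standardize

variable {α : Type*} [LinearOrder α] {p : ℕ}

noncomputable def standardize (g : Fin p → α) : Perm (Fin p) := (Tuple.sort g)⁻¹

theorem standardize_lt_standardize_iff {g : Fin p → α} (hg : Function.Injective g) (i j : Fin p) :
    standardize g i < standardize g j ↔ g i < g j := by
  have hmono : StrictMono (g ∘ Tuple.sort g) :=
    (Tuple.monotone_sort g).strictMono_of_injective (hg.comp (Tuple.sort g).injective)
  rw [← hmono.lt_iff_lt]
  simp [standardize]

end Standardize

section Patterns

variable {p q m : ℕ}

theorem IsPattern.trans {π : Perm (Fin p)} {ρ : Perm (Fin q)} {σ : Perm (Fin m)}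
    (h₁ : IsPattern π ρ) (h₂ : IsPattern ρ σ) : IsPattern π σ := by
  obtain ⟨f, hf, hfρ⟩ := h₁
  obtain ⟨g, hg, hgσ⟩ := h₂
  exact ⟨g ∘ f, hg.comp hf, fun i j => (hfρ i j).trans (hgσ _ _)⟩

theorem Separable.of_isPattern {ρ : Perm (Fin q)} {σ : Perm (Fin m)} (hσ : Separable σ)
    (h : IsPattern ρ σ) : Separable ρ :=
  ⟨fun h' => hσ.1 (h'.trans h), fun h' => hσ.2 (h'.trans h)⟩

theorem isPattern_standardize (σ : Perm (Fin m)) {e : Fin p → Fin m} (he : StrictMono e) :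
    IsPattern (standardize (σ ∘ e)) σ :=
  ⟨e, he, standardize_lt_standardize_iff (σ.injective.comp he.injective)⟩

theorem eq_one_of_isPattern_one {π : Perm (Fin p)} (h : IsPattern π (1 : Perm (Fin m))) :
    π = 1 := by
  obtain ⟨f, hf, hπ⟩ := h
  exact Perm.eq_of_lt_iff_lt fun i j => (hπ i j).trans hf.lt_iff_lt

theorem separable_one : Separable (1 : Perm (Fin m)) :=
  ⟨fun h => absurd (eq_one_of_isPattern_one h) (by decide),
    fun h => absurd (eq_one_of_isPattern_one h) (by decide)⟩

/-- `π₂` is the pattern of `ρ` at the positions of `π`, and `π₁` that of `τ` at their images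
under `ρ`. -/
theorem IsPattern.exists_mul_of_mul {π : Perm (Fin p)} {τ ρ : Perm (Fin m)}
    (h : IsPattern π (τ * ρ)) :
    ∃ π₁ π₂ : Perm (Fin p), π = π₁ * π₂ ∧ IsPattern π₁ τ ∧ IsPattern π₂ ρ := by
  obtain ⟨f, hf, hπ⟩ := h
  set π₂ := standardize (ρ ∘ f)
  have hπ₂ : ∀ i j, π₂ i < π₂ j ↔ ρ (f i) < ρ (f j) :=
    standardize_lt_standardize_iff (ρ.injective.comp hf.injective)
  have he : StrictMono fun k => ρ (f (π₂.symm k)) := fun k l hkl =>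
    (hπ₂ _ _).1 (by simpa using hkl)
  refine ⟨π * π₂⁻¹, π₂, by simp, ⟨_, he, fun k l => ?_⟩, ⟨f, hf, hπ₂⟩⟩
  simpa using hπ (π₂.symm k) (π₂.symm l)

open Classical in
noncomputable def separables (p : ℕ) : Finset (Perm (Fin p)) := {σ | Separable σ}

@[simp]
theorem mem_separables {σ : Perm (Fin p)} : σ ∈ separables p ↔ Separable σ := by
  simp [separables]

theorem IsPattern.mem_pow_of_prod {π : Perm (Fin p)} {l : List (Perm (Fin m))}
    (hl : ∀ τ ∈ l, Separable τ) (h : IsPattern π l.prod) :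
    π ∈ separables p ^ l.length := by
  induction l generalizing π with
  | nil => simp [eq_one_of_isPattern_one h]
  | cons τ l ih =>
    obtain ⟨π₁, π₂, rfl, h₁, h₂⟩ := IsPattern.exists_mul_of_mul h
    rw [List.length_cons, pow_succ']
    exact mul_mem_mul (mem_separables.2 ((hl τ (by simp)).of_isPattern h₁))
      (ih (fun τ' hτ' => hl τ' (by simp [hτ'])) h₂)

end Patterns

section Decomposition

variable {α : Type*} [LinearOrder α] {p m n : ℕ}

/-- `IsPattern` for sequences in any linear order; for a permutation `σ`, `IsPattern π σ` unfolds to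
`ContainsPattern π σ`. -/
def ContainsPattern (π : Perm (Fin p)) (g : Fin m → α) : Prop :=
  ∃ f : Fin p → Fin m, StrictMono f ∧ ∀ i j, π i < π j ↔ g (f i) < g (f j)

theorem ContainsPattern.of_comp {π : Perm (Fin p)} {g : Fin n → α} {e : Fin m → Fin n}
    (he : StrictMono e) (h : ContainsPattern π (g ∘ e)) : ContainsPattern π g := by
  obtain ⟨f, hf, hπ⟩ := h
  exact ⟨e ∘ f, he.comp hf, hπ⟩

theorem containsPattern_toDual_iff {π : Perm (Fin p)} {g : Fin m → α} :
    ContainsPattern π (toDual ∘ g) ↔ ContainsPattern (Fin.revPerm * π) g := by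
  refine exists_congr fun f => and_congr_right fun _ => ⟨fun h i j => ?_, fun h i j => ?_⟩
  · simpa [Fin.rev_lt_rev] using h j i
  · simpa [Fin.rev_lt_rev] using h j i

theorem containsPattern_of_strictMono {π : Perm (Fin p)} {g : Fin m → α} {f : Fin p → Fin m}
    (hf : StrictMono f) (hg : StrictMono (g ∘ f ∘ π.symm)) : ContainsPattern π g :=
  ⟨f, hf, fun i j => by simpa using hg.lt_iff_lt (a := π i) (b := π j) |>.symm⟩

theorem containsPattern_perm3142 {g : Fin m → α} {a b c d : Fin m} (hab : a < b) (hbc : b < c)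
    (hcd : c < d) (h₁ : g b < g d) (h₂ : g d < g a) (h₃ : g a < g c) :
    ContainsPattern perm3142 g := by
  refine containsPattern_of_strictMono (f := ![a, b, c, d]) ?_ ?_
  · simp [Fin.strictMono_iff_lt_succ, Fin.forall_fin_succ, hab, hbc, hcd]
  · simpa [Fin.strictMono_iff_lt_succ, Fin.forall_fin_succ, perm3142] using ⟨h₁, h₂, h₃⟩

/-- `g` is the direct sum of its first `t` entries and the others; `IsSumAt (toDual ∘ g) t` says that
it is their skew sum. -/
def IsSumAt (g : Fin n → α) (t : ℕ) : Prop :=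
  ∀ i j : Fin n, (i : ℕ) < t → t ≤ (j : ℕ) → g i < g j

theorem exists_isSumAt_of_lt_last_lt {g : Fin (n + 1) → α} (hn : 0 < n) (k : Fin (n + 1))
    (hbelow : ∀ i, i < k → g i < g (Fin.last n))
    (habove : ∀ j, k ≤ j → (j : ℕ) < n → g (Fin.last n) < g j) :
    ∃ t, 0 < t ∧ t < n + 1 ∧ (IsSumAt g t ∨ IsSumAt (toDual ∘ g) t) := by
  rcases Nat.eq_zero_or_pos k with hk₀ | hk₀
  · refine ⟨n, hn, n.lt_succ_self, Or.inr fun i j hi hj => ?_⟩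
    obtain rfl : j = Fin.last n := Fin.ext (by rw [Fin.val_last]; omega)
    exact habove i (by simp [Fin.le_def, hk₀]) hi
  · refine ⟨k, hk₀, k.is_lt, Or.inl fun i j hi hj => ?_⟩
    rcases (Fin.le_last j).lt_or_eq with hjn | rfl
    exacts [(hbelow i hi).trans (habove j hj hjn), hbelow i hi]

theorem exists_isSumAt_of_isSumAt_init {g : Fin (n + 1) → α} (hg : Function.Injective g)
    (h3142 : ¬ContainsPattern perm3142 g) {t : ℕ} (ht₀ : 0 < t) (htn : t < n)
    (hsum : IsSumAt (g ∘ Fin.castSucc) t) :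
    ∃ k, 0 < k ∧ k < n + 1 ∧ (IsSumAt g k ∨ IsSumAt (toDual ∘ g) k) := by
  set v := g (Fin.last n)
  have hsum' : ∀ i j : Fin (n + 1), (i : ℕ) < t → t ≤ j → (j : ℕ) < n → g i < g j :=
    fun i j hi hj hjn => hsum ⟨i, by omega⟩ ⟨j, hjn⟩ hi hj
  have hlast : ∀ j : Fin (n + 1), (j : ℕ) < n ∨ j = Fin.last n := fun j =>
    (Fin.le_last j).lt_or_eq
  have hne : ∀ i : Fin (n + 1), (i : ℕ) < n → g i ≠ v := fun i hi h => by
    rw [hg h] at hi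
    simp at hi
  by_cases hlow : ∀ i : Fin (n + 1), (i : ℕ) < t → g i < v
  · refine ⟨t, ht₀, by omega, Or.inl fun i j hi hj => ?_⟩
    rcases hlast j with hjn | rfl
    exacts [hsum' i j hi hj hjn, hlow i hi]
  push Not at hlow
  -- Otherwise let `k` be the first position before `t` with value above `v`. From `k` on all
  -- values are above `v`: one below `v` inside `(k, t)` would form a 3142 with `k`, `t` and `last`.
  classical
  set B := univ.filter fun i : Fin (n + 1) => (i : ℕ) < t ∧ v < g i
  have hB : B.Nonempty := by
    obtain ⟨i, hi, hvi⟩ := hlow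
    exact ⟨i, by simpa [B, hi] using hvi.lt_of_ne' (hne i (by omega))⟩
  set k := B.min' hB
  obtain ⟨hkt, hvk⟩ : (k : ℕ) < t ∧ v < g k := by simpa [B] using B.min'_mem hB
  have below : ∀ i, i < k → g i < v := fun i hik => by
    refine lt_of_le_of_ne (not_lt.1 fun hvi => ?_) (hne i (by omega))
    exact (B.min'_le i (by simpa [B, hvi] using (Fin.lt_def.1 hik).trans hkt)).not_gt hik
  have above : ∀ j, k ≤ j → (j : ℕ) < n → v < g j := fun j hkj hjn => by
    by_cases hjt : (j : ℕ) < t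
    · refine lt_of_le_of_ne (not_lt.1 fun hjv => h3142 ?_) (hne j hjn).symm
      have hkj' : k < j := lt_of_le_of_ne hkj fun h => lt_irrefl _ (hjv.trans (h ▸ hvk))
      exact containsPattern_perm3142 (c := ⟨t, by omega⟩) hkj' hjt htn hjv hvk
        (hsum' k _ hkt le_rfl htn)
    · exact hvk.trans (hsum' k j hkt (not_lt.1 hjt) hjn)
  exact exists_isSumAt_of_lt_last_lt (by omega) k below above

theorem exists_isSumAt {g : Fin n → α} (hg : Function.Injective g)
    (h3142 : ¬ContainsPattern perm3142 g) (h2413 : ¬ContainsPattern perm2413 g) (hn : 2 ≤ n) :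
    ∃ t, 0 < t ∧ t < n ∧ (IsSumAt g t ∨ IsSumAt (toDual ∘ g) t) := by
  induction n, hn using Nat.le_induction with
  | base =>
    refine ⟨1, one_pos, one_lt_two, ?_⟩
    have h01 : ∀ i j : Fin 2, (i : ℕ) < 1 → 1 ≤ (j : ℕ) → i = 0 ∧ j = 1 := fun i j hi hj =>
      ⟨Fin.ext (by simp; omega), Fin.ext (by simp; omega)⟩
    rcases (hg.ne (show (0 : Fin 2) ≠ 1 by decide)).lt_or_gt with h | h
    · exact Or.inl fun i j hi hj => by obtain ⟨rfl, rfl⟩ := h01 i j hi hj; exact h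
    · exact Or.inr fun i j hi hj => by obtain ⟨rfl, rfl⟩ := h01 i j hi hj; exact h
  | succ n hn ih =>
    have hdual : ¬ContainsPattern perm3142 (toDual ∘ g) := by
      rwa [containsPattern_toDual_iff, show Fin.revPerm * perm3142 = perm2413 by decide]
    obtain ⟨t, ht₀, htn, hsum | hsum⟩ := ih (hg.comp (Fin.castSucc_injective n))
      (fun h => h3142 (h.of_comp Fin.strictMono_castSucc))
      (fun h => h2413 (h.of_comp Fin.strictMono_castSucc))
    · exact exists_isSumAt_of_isSumAt_init hg h3142 ht₀ htn hsum
    · obtain ⟨k, hk₀, hkn, h | h⟩ := exists_isSumAt_of_isSumAt_init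
        (toDual.injective.comp hg) hdual ht₀ htn hsum
      exacts [⟨k, hk₀, hkn, Or.inr h⟩, ⟨k, hk₀, hkn, Or.inl h⟩]

end Decomposition

section Counting

variable {α β : Type*} [LinearOrder α] [LinearOrder β] {n p t : ℕ}

theorem lt_iff_lt_of_isSumAt {g₁ : Fin n → α} {g₂ : Fin n → β} (h₁ : IsSumAt g₁ t)
    (h₂ : IsSumAt g₂ t)
    (hblock : ∀ i j : Fin n, ((i : ℕ) < t ↔ (j : ℕ) < t) → (g₁ i < g₁ j ↔ g₂ i < g₂ j))
    (i j : Fin n) : g₁ i < g₁ j ↔ g₂ i < g₂ j := by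
  by_cases hi : (i : ℕ) < t <;> by_cases hj : (j : ℕ) < t
  · exact hblock i j (iff_of_true hi hj)
  · exact iff_of_true (h₁ i j hi (not_lt.1 hj)) (h₂ i j hi (not_lt.1 hj))
  · exact iff_of_false (h₁ j i hj (not_lt.1 hi)).not_gt (h₂ j i hj (not_lt.1 hi)).not_gt
  · exact hblock i j (iff_of_false hi hj)

theorem lt_iff_lt_of_standardize_comp_eq {σ₁ σ₂ : Perm (Fin n)} {e : Fin p → Fin n}
    (he : Function.Injective e) (h : standardize (σ₁ ∘ e) = standardize (σ₂ ∘ e))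
    (a b : Fin p) : σ₁ (e a) < σ₁ (e b) ↔ σ₂ (e a) < σ₂ (e b) := by
  have h₁ := standardize_lt_standardize_iff (σ₁.injective.comp he) a b
  rw [h] at h₁
  exact h₁.symm.trans (standardize_lt_standardize_iff (σ₂.injective.comp he) a b)

theorem card_filter_separables_le (ht : t ≤ n) (P : Perm (Fin n) → Prop) [DecidablePred P]
    (hP : ∀ σ₁ σ₂, P σ₁ → P σ₂ →
      (∀ i j : Fin n, ((i : ℕ) < t ↔ (j : ℕ) < t) → (σ₁ i < σ₁ j ↔ σ₂ i < σ₂ j)) → σ₁ = σ₂) :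
    #{σ ∈ separables n | P σ} ≤ #(separables t) * #(separables (n - t)) := by
  set left : Fin t → Fin n := Fin.castLE ht
  set right : Fin (n - t) → Fin n := fun j => ⟨j + t, by omega⟩
  have hleft : StrictMono left := Fin.strictMono_castLE ht
  have hright : StrictMono right := fun a b hab => Fin.mk_lt_mk.2 (by simpa using hab)
  rw [← card_product]
  refine card_le_card_of_injOn (fun σ => (standardize (σ ∘ left), standardize (σ ∘ right)))
    (fun σ hσ => ?_) (fun σ₁ hσ₁ σ₂ hσ₂ heq => ?_)
  · have hσ := mem_separables.1 (mem_filter.1 hσ).1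
    simp only [coe_product, Set.mem_prod, mem_coe, mem_separables]
    exact ⟨hσ.of_isPattern (isPattern_standardize σ hleft),
      hσ.of_isPattern (isPattern_standardize σ hright)⟩
  · simp only [mem_coe, mem_filter, Prod.mk.injEq] at hσ₁ hσ₂ heq
    refine hP σ₁ σ₂ hσ₁.2 hσ₂.2 fun i j hij => ?_
    by_cases hi : (i : ℕ) < t
    · exact lt_iff_lt_of_standardize_comp_eq hleft.injective heq.1 ⟨i, hi⟩ ⟨j, hij.1 hi⟩
    · obtain ⟨a, rfl⟩ : ∃ a, right a = i := ⟨⟨i - t, by omega⟩, Fin.ext (by simp [right]; omega)⟩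
      obtain ⟨b, rfl⟩ : ∃ b, right b = j :=
        ⟨⟨j - t, by omega⟩, Fin.ext (by simp [right] at hij ⊢; omega)⟩
      exact lt_iff_lt_of_standardize_comp_eq hright.injective heq.2 a b

theorem card_separables_le_sum (hn : 2 ≤ n) :
    #(separables n) ≤ ∑ t ∈ Ico 1 n, 2 * (#(separables t) * #(separables (n - t))) := by
  classical
  have hcover : separables n ⊆ (Ico 1 n).biUnion fun t =>
      {σ ∈ separables n | IsSumAt σ t} ∪ {σ ∈ separables n | IsSumAt (toDual ∘ σ) t} := by
    intro σ hσ
    obtain ⟨t, ht₀, htn, hsplit⟩ :=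
      exists_isSumAt σ.injective (mem_separables.1 hσ).2 (mem_separables.1 hσ).1 hn
    simpa [hσ, ht₀, htn] using ⟨t, ⟨ht₀, htn⟩, hsplit⟩
  refine (card_le_card hcover).trans (card_biUnion_le.trans (sum_le_sum fun t ht => ?_))
  have ht : t ≤ n := (mem_Ico.1 ht).2.le
  rw [two_mul]
  refine (card_union_le _ _).trans (add_le_add ?_ ?_)
  · exact card_filter_separables_le ht _ fun σ₁ σ₂ h₁ h₂ hblock =>
      Perm.eq_of_lt_iff_lt (lt_iff_lt_of_isSumAt h₁ h₂ hblock)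
  · exact card_filter_separables_le ht _ fun σ₁ σ₂ h₁ h₂ hblock =>
      Perm.eq_of_lt_iff_lt fun i j =>
        lt_iff_lt_of_isSumAt h₁ h₂ (fun i j hij => hblock j i hij.symm) j i

theorem card_separables_succ_le_catalan (n : ℕ) :
    #(separables (n + 1)) ≤ 2 ^ n * catalan n := by
  induction n using Nat.strong_induction_on with | _ n ih => ?_
  rcases n with _ | n
  · simpa using card_le_univ (separables 1)
  calc #(separables (n + 2))
      ≤ ∑ t ∈ Ico 1 (n + 2), 2 * (#(separables t) * #(separables (n + 2 - t))) :=
        card_separables_le_sum (by omega)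
    _ = ∑ i ∈ range (n + 1), 2 * (#(separables (i + 1)) * #(separables (n - i + 1))) := by
        rw [sum_Ico_eq_sum_range]
        refine sum_congr rfl fun i hi => ?_
        rw [add_comm 1 i, show n + 2 - (i + 1) = n - i + 1 by have := mem_range.1 hi; omega]
    _ ≤ ∑ i ∈ range (n + 1), 2 * ((2 ^ i * catalan i) * (2 ^ (n - i) * catalan (n - i))) := by
        gcongr with i hi
        · exact ih i (by have := mem_range.1 hi; omega)
        · exact ih (n - i) (by omega)
    _ = 2 ^ (n + 1) * catalan (n + 1) := by
        rw [catalan_succ, Fin.sum_univ_eq_sum_range (fun i => catalan i * catalan (n - i)),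
          mul_sum]
        refine sum_congr rfl fun i hi => ?_
        rw [pow_succ, ← Nat.add_sub_cancel' (mem_range.1 hi |> Nat.lt_succ_iff.1), pow_add]
        simp only [Nat.add_sub_cancel_left]
        ring

theorem card_separables_le (n : ℕ) : #(separables n) ≤ 8 ^ n := by
  rcases n with _ | n
  · simpa using card_le_univ (separables 0)
  calc #(separables (n + 1)) ≤ 2 ^ n * catalan n := card_separables_succ_le_catalan n
    _ ≤ 2 ^ n * 4 ^ n := by
        gcongr
        calc catalan n ≤ (n + 1) * catalan n := Nat.le_mul_of_pos_left _ n.succ_pos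
          _ = n.centralBinom := succ_mul_catalan_eq_centralBinom n
          _ ≤ 4 ^ n := Nat.centralBinom_le_four_pow n
    _ ≤ 8 ^ (n + 1) := by
        rw [← mul_pow]
        exact Nat.pow_le_pow_right (by norm_num) n.le_succ

end Counting

theorem product_of_separables_avoids_some_pattern_general (c : ℕ) :
    ∃ (p : ℕ) (π : Equiv.Perm (Fin p)),
      ∀ (n : ℕ) (σ : Equiv.Perm (Fin n)) (l : List (Equiv.Perm (Fin n))),
        l.length ≤ c → (∀ τ ∈ l, Separable τ) → l.prod = σ → ¬ IsPattern π σ := by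
  obtain ⟨p, hp⟩ := Nat.exists_pow_lt_factorial (8 ^ c)
  have hcard : #(separables p ^ c) < #(univ : Finset (Perm (Fin p))) :=
    calc #(separables p ^ c) ≤ #(separables p) ^ c := card_pow_le
      _ ≤ (8 ^ p) ^ c := Nat.pow_le_pow_left (card_separables_le p) c
      _ = (8 ^ c) ^ p := by rw [← pow_mul, ← pow_mul, mul_comm]
      _ < p ! := hp
      _ = #(univ : Finset (Perm (Fin p))) := by simp [Fintype.card_perm]
  obtain ⟨π, -, hπ⟩ := exists_mem_notMem_of_card_lt_card hcard
  refine ⟨p, π, fun n σ l hlen hsep hprod hpat => hπ ?_⟩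
  subst hprod
  exact pow_subset_pow_right (mem_separables.2 separable_one) hlen (hpat.mem_pow_of_prod hsep)

/-- For every `c ≥ 1` there is a permutation `π` such that every permutation that is a
product of at most `c` separable permutations avoids `π` as a pattern. -/
theorem product_of_separables_avoids_some_pattern (c : ℕ) (hc : 1 ≤ c) :
    ∃ (p : ℕ) (π : Equiv.Perm (Fin p)),
      ∀ (n : ℕ) (σ : Equiv.Perm (Fin n)) (l : List (Equiv.Perm (Fin n))),
        l.length ≤ c → (∀ τ ∈ l, Separable τ) → l.prod = σ → ¬ IsPattern π σ :=
  product_of_separables_avoids_some_pattern_general c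
end

section
/- Every 2-almost mixed free permutation is separable. -/
/-- The cell of the matrix `M` with rows `R` and columns `C` is horizontal:
all rows are constant. -/
def HorizontalCell {n : ℕ} (M : Fin n → Fin n → Prop) (R C : Set (Fin n)) : Prop :=
  ∀ x ∈ R, ∀ y ∈ C, ∀ y' ∈ C, (M x y ↔ M x y')

/-- The cell of the matrix `M` with rows `R` and columns `C` is vertical:
all columns are constant. -/
def VerticalCell {n : ℕ} (M : Fin n → Fin n → Prop) (R C : Set (Fin n)) : Prop :=
  ∀ y ∈ C, ∀ x ∈ R, ∀ x' ∈ R, (M x y ↔ M x' y)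

/-- The cell is mixed: neither horizontal nor vertical. -/
def MixedCell {n : ℕ} (M : Fin n → Fin n → Prop) (R C : Set (Fin n)) : Prop :=
  ¬ HorizontalCell M R C ∧ ¬ VerticalCell M R C

/-- `M` has a `k`-almost mixed minor: a division of rows and columns into `k` intervals each
(given by monotone surjections onto `Fin k`) such that every off-diagonal cell is mixed. -/
def HasAlmostMixedMinor {n : ℕ} (M : Fin n → Fin n → Prop) (k : ℕ) : Prop :=
  ∃ R C : Fin n → Fin k, Monotone R ∧ Monotone C ∧
    Function.Surjective R ∧ Function.Surjective C ∧
    ∀ i j : Fin k, i ≠ j → MixedCell M {x | R x = i} {y | C y = j}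

/-- The adjacency matrix of the biorder of `σ`: entry `(x, y)` is 1 iff `σ x < σ y`. -/
def BiorderMatrix {n : ℕ} (σ : Equiv.Perm (Fin n)) : Fin n → Fin n → Prop :=
  fun x y => σ x < σ y

/-- `σ` is `k`-almost mixed free: the adjacency matrix of its biorder has no
`k`-almost mixed minor. -/
def AlmostMixedFree {n : ℕ} (σ : Equiv.Perm (Fin n)) (k : ℕ) : Prop :=
  ¬ HasAlmostMixedMinor (BiorderMatrix σ) k

lemma aux_minor {n : ℕ} (M : Fin n → Fin n → Prop) (a b c d : Fin n)
    (hab : a < b) (hbc : b < c) (hcd : c < d)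
    (h1 : ¬ (M a c ↔ M a d)) (h2 : ¬ (M a d ↔ M b d))
    (h3 : ¬ (M c a ↔ M d a)) (h4 : ¬ (M d a ↔ M d b)) :
    HasAlmostMixedMinor M 2 := by
  classical
  refine ⟨fun x => if x ≤ b then 0 else 1, fun x => if x ≤ b then 0 else 1, ?_, ?_, ?_, ?_, ?_⟩
  case _ =>
    intro x y hxy
    by_cases hx : x ≤ b
    · by_cases hy : y ≤ b <;> simp [hx, hy]
    · have hy : ¬ y ≤ b := fun hy => hx (hxy.trans hy)
      simp [hx, hy]
  case _ =>
    intro x y hxy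
    by_cases hx : x ≤ b
    · by_cases hy : y ≤ b <;> simp [hx, hy]
    · have hy : ¬ y ≤ b := fun hy => hx (hxy.trans hy)
      simp [hx, hy]
  case _ =>
    intro i
    fin_cases i
    · exact ⟨b, by simp⟩
    · exact ⟨c, by simp [not_le.mpr hbc]⟩
  case _ =>
    intro i
    fin_cases i
    · exact ⟨b, by simp⟩
    · exact ⟨c, by simp [not_le.mpr hbc]⟩
  case _ =>
    have ha : a ≤ b := hab.le
    have hb : b ≤ b := le_refl b
    have hc : ¬ c ≤ b := not_le.mpr hbc
    have hd : ¬ d ≤ b := not_le.mpr (hbc.trans hcd)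
    intro i j hij
    fin_cases i <;> fin_cases j
    · exact absurd rfl hij
    · -- cell (0,1): rows ≤ b, columns > b
      constructor
      · intro H
        exact h1 (H a (by simp [ha]) c (by simp [hc, hbc]) d (by simp [hd, hbc.trans hcd]))
      · intro H
        exact h2 ((H d (by simp [hd, hbc.trans hcd]) a (by simp [ha]) b (by simp [hb])))
    · -- cell (1,0): rows > b, columns ≤ b
      constructor
      · intro H
        exact h4 (H d (by simp [hd, hbc.trans hcd]) a (by simp [ha]) b (by simp [hb]))
      · intro H
        exact h3 (H a (by simp [ha]) c (by simp [hc, hbc]) d (by simp [hd, hbc.trans hcd]))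
    · exact absurd rfl hij

/-- Every 2-almost mixed free permutation is separable. -/
theorem separable_of_two_almost_mixed_free {n : ℕ} (σ : Equiv.Perm (Fin n))
    (h : AlmostMixedFree σ 2) : Separable σ := by
  constructor
  · rintro ⟨f, hf, hrel⟩
    apply h
    refine aux_minor (BiorderMatrix σ) (f 0) (f 1) (f 2) (f 3)
      (hf (by decide)) (hf (by decide)) (hf (by decide)) ?_ ?_ ?_ ?_
    · have e1 : ¬ BiorderMatrix σ (f 0) (f 2) := fun hh => absurd ((hrel 0 2).mpr hh) (by decide)
      have e2 : BiorderMatrix σ (f 0) (f 3) := (hrel 0 3).mp (by decide)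
      simp [e1, e2]
    · have e2 : BiorderMatrix σ (f 0) (f 3) := (hrel 0 3).mp (by decide)
      have e3 : ¬ BiorderMatrix σ (f 1) (f 3) := fun hh => absurd ((hrel 1 3).mpr hh) (by decide)
      simp [e2, e3]
    · have e4 : BiorderMatrix σ (f 2) (f 0) := (hrel 2 0).mp (by decide)
      have e5 : ¬ BiorderMatrix σ (f 3) (f 0) := fun hh => absurd ((hrel 3 0).mpr hh) (by decide)
      simp [e4, e5]
    · have e5 : ¬ BiorderMatrix σ (f 3) (f 0) := fun hh => absurd ((hrel 3 0).mpr hh) (by decide)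
      have e6 : BiorderMatrix σ (f 3) (f 1) := (hrel 3 1).mp (by decide)
      simp [e5, e6]
  · rintro ⟨f, hf, hrel⟩
    apply h
    refine aux_minor (BiorderMatrix σ) (f 0) (f 1) (f 2) (f 3)
      (hf (by decide)) (hf (by decide)) (hf (by decide)) ?_ ?_ ?_ ?_
    · have e1 : BiorderMatrix σ (f 0) (f 2) := (hrel 0 2).mp (by decide)
      have e2 : ¬ BiorderMatrix σ (f 0) (f 3) := fun hh => absurd ((hrel 0 3).mpr hh) (by decide)
      simp [e1, e2]
    · have e2 : ¬ BiorderMatrix σ (f 0) (f 3) := fun hh => absurd ((hrel 0 3).mpr hh) (by decide)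
      have e3 : BiorderMatrix σ (f 1) (f 3) := (hrel 1 3).mp (by decide)
      simp [e2, e3]
    · have e4 : ¬ BiorderMatrix σ (f 2) (f 0) := fun hh => absurd ((hrel 2 0).mpr hh) (by decide)
      have e5 : BiorderMatrix σ (f 3) (f 0) := (hrel 3 0).mp (by decide)
      simp [e4, e5]
    · have e5 : BiorderMatrix σ (f 3) (f 0) := (hrel 3 0).mp (by decide)
      have e6 : ¬ BiorderMatrix σ (f 3) (f 1) := fun hh => absurd ((hrel 3 1).mpr hh) (by decide)
      simp [e5, e6]
end

section
/- Every 2^k-shuffle, i.e., every permutation σ ∈ S_n whose domain admits a partition [n] = X_1 ⊎ ⋯ ⊎ X_{2^k} such that the pattern of σ induced on each X_i is an identity permutation, is a composition of at most 2k separable permutations. -/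
/-- A class of permutations: one set of permutations for each size. -/
abbrev PermClass := ∀ n : ℕ, Equiv.Perm (Fin n) → Prop

/-- `σ` is (an isomorphic copy of) the permutation of the biorder obtained by restricting
the two orders `lt1`, `lt2` to the subset `S`: the enumeration `e` lists `S` increasingly
with respect to `lt1`, and the relative order of the values of `σ` matches `lt2`. -/
def BiorderPerm {V : Type*} (lt1 lt2 : V → V → Prop) (S : Set V) {n : ℕ}
    (σ : Equiv.Perm (Fin n)) : Prop :=
  ∃ e : Fin n → V, (∀ i, e i ∈ S) ∧ (∀ x ∈ S, ∃ i, e i = x) ∧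
    (∀ i j : Fin n, i < j ↔ lt1 (e i) (e j)) ∧
    (∀ i j : Fin n, σ i < σ j ↔ lt2 (e i) (e j))

/-- Composition of two classes of permutations: `C ∘ D = {σ ∘ τ}`. -/
def PermClass.comp (C D : PermClass) : PermClass :=
  fun n σ => ∃ τ₁ τ₂ : Equiv.Perm (Fin n), C n τ₁ ∧ D n τ₂ ∧ σ = τ₁ * τ₂

/-- `C^k`: compositions of `k` permutations of `C` of the same size. -/
def PermClass.pow (C : PermClass) (k : ℕ) : PermClass :=
  fun n σ => ∃ l : List (Equiv.Perm (Fin n)), l.length = k ∧ (∀ τ ∈ l, C n τ) ∧ l.prod = σ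

/-- `C⁻¹ = {σ⁻¹ : σ ∈ C}`. -/
def PermClass.inv (C : PermClass) : PermClass := fun n σ => C n σ⁻¹

/-- `σ` is the (iterated one-step) substitution of the permutations `α i` inside `τ`:
there is a monotone surjection `g` onto `Fin m` whose fibres are the blocks, the pattern
of `σ` induced on the `i`-th block is `α i`, and distinct blocks compare according
to `τ`. -/
def IsInflation {m : ℕ} (τ : Equiv.Perm (Fin m)) (ns : Fin m → ℕ)
    (α : ∀ i : Fin m, Equiv.Perm (Fin (ns i))) {n : ℕ} (σ : Equiv.Perm (Fin n)) : Prop :=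
  ∃ g : Fin n → Fin m, Monotone g ∧ Function.Surjective g ∧
    (∀ i : Fin m, BiorderPerm (· < ·) (fun a b => σ a < σ b) {x | g x = i} (α i)) ∧
    (∀ x y : Fin n, g x ≠ g y → (σ x < σ y ↔ τ (g x) < τ (g y)))

/-- `C` is closed under substitution: substituting permutations of `C` inside a
permutation of `C` stays in `C`. -/
def ClosedUnderSubstitution (C : PermClass) : Prop :=
  ∀ (m : ℕ) (τ : Equiv.Perm (Fin m)) (ns : Fin m → ℕ)
    (α : ∀ i : Fin m, Equiv.Perm (Fin (ns i))) (n : ℕ) (σ : Equiv.Perm (Fin n)),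
    C m τ → (∀ i, C (ns i) (α i)) → IsInflation τ ns α σ → C n σ

/-- The order-reversing permutation of `Fin n`. -/
def finRevPerm (n : ℕ) : Equiv.Perm (Fin n) :=
  ⟨Fin.rev, Fin.rev, Fin.rev_rev, Fin.rev_rev⟩

/-- `C` is closed under symmetry: conjugating by the decreasing permutation stays in `C`. -/
def ClosedUnderSymmetry (C : PermClass) : Prop :=
  ∀ (n : ℕ) (σ : Equiv.Perm (Fin n)), C n σ → C n (finRevPerm n * σ * finRevPerm n)

/-- `C` is closed under taking patterns. -/
def ClosedUnderPatterns (C : PermClass) : Prop :=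
  ∀ (p m : ℕ) (π : Equiv.Perm (Fin p)) (σ : Equiv.Perm (Fin m)),
    IsPattern π σ → C m σ → C p π

/-- `C` is closed under inverse. -/
def ClosedUnderInverse (C : PermClass) : Prop :=
  ∀ (n : ℕ) (σ : Equiv.Perm (Fin n)), C n σ → C n σ⁻¹

/-- The class of separable permutations. -/
def SepClass : PermClass := fun _ σ => Separable σ

/-- `σ` is a `k`-shuffle of the class `C`: its domain can be partitioned into `k` sets,
on each of which the induced pattern of `σ` belongs to `C`. -/
def ShuffleOf (k : ℕ) (C : PermClass) {n : ℕ} (σ : Equiv.Perm (Fin n)) : Prop :=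
  ∃ X : Fin k → Set (Fin n), (∀ x : Fin n, ∃! i, x ∈ X i) ∧
    ∀ (i : Fin k) (m : ℕ) (τ : Equiv.Perm (Fin m)),
      BiorderPerm (· < ·) (fun a b => σ a < σ b) (X i) τ → C m τ


section Aux

-- inverse closure
lemma isPattern_inv {p m : ℕ} {π : Equiv.Perm (Fin p)} {σ : Equiv.Perm (Fin m)}
    (h : IsPattern π σ) : IsPattern π⁻¹ σ⁻¹ := by
  obtain ⟨f, hf, hiff⟩ := h
  refine ⟨fun i => σ (f (π⁻¹ i)), ?_, ?_⟩
  · intro i j hij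
    have : π (π⁻¹ i) < π (π⁻¹ j) := by
      simpa using hij
    exact (hiff _ _).mp this
  · intro i j
    have e1 : σ⁻¹ (σ (f (π⁻¹ i))) = f (π⁻¹ i) := by simp
    have e2 : σ⁻¹ (σ (f (π⁻¹ j))) = f (π⁻¹ j) := by simp
    rw [e1, e2]
    exact (hf.lt_iff_lt).symm

lemma perm2413_inv : perm2413⁻¹ = perm3142 := by
  ext x
  fin_cases x <;> rfl

lemma perm3142_inv : perm3142⁻¹ = perm2413 := by
  ext x
  fin_cases x <;> rfl

lemma Separable.inv {n : ℕ} {σ : Equiv.Perm (Fin n)} (h : Separable σ) : Separable σ⁻¹ := by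
  obtain ⟨h1, h2⟩ := h
  constructor
  · intro hp
    have := isPattern_inv hp
    rw [perm2413_inv, inv_inv] at this
    exact h2 this
  · intro hp
    have := isPattern_inv hp
    rw [perm3142_inv, inv_inv] at this
    exact h1 this

open Finset

variable {n : ℕ}

/-- number of elements of S strictly below x -/
def cntBelow (S : Finset (Fin n)) (x : Fin n) : ℕ := (S.filter (· < x)).card

def muFun (S : Finset (Fin n)) (x : Fin n) : ℕ :=
  if x ∈ S then n - 1 - cntBelow S x else cntBelow Sᶜ x

lemma cntBelow_lt_of_mem {S : Finset (Fin n)} {x : Fin n} (hx : x ∈ S) :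
    cntBelow S x < S.card := by
  apply Finset.card_lt_card
  constructor
  · exact Finset.filter_subset _ _
  · intro hsub
    exact absurd (hsub hx) (by simp)

lemma cntBelow_strict {S : Finset (Fin n)} {x y : Fin n} (hx : x ∈ S) (hxy : x < y) :
    cntBelow S x < cntBelow S y := by
  apply Finset.card_lt_card
  constructor
  · intro z hz
    simp only [mem_filter] at hz ⊢
    exact ⟨hz.1, hz.2.trans hxy⟩
  · intro hsub
    have hmem : x ∈ S.filter (· < y) := Finset.mem_filter.mpr ⟨hx, hxy⟩
    have := hsub hmem
    simp at this

lemma muFun_lt_n {S : Finset (Fin n)} (x : Fin n) : muFun S x < n := by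
  have hn : 0 < n := x.pos
  unfold muFun
  split
  · omega
  · have := cntBelow_lt_of_mem (S := Sᶜ) (x := x) (by simpa using ‹x ∉ S›)
    have : cntBelow Sᶜ x < n := lt_of_lt_of_le this (Finset.card_le_univ _ |>.trans (by simp))
    omega

-- key order facts
lemma muFun_lt_muFun_of_notmem {S : Finset (Fin n)} {x y : Fin n}
    (hx : x ∉ S) (hy : y ∉ S) (hxy : x < y) : muFun S x < muFun S y := by
  unfold muFun
  simp only [if_neg hx, if_neg hy]
  exact cntBelow_strict (by simpa using hx) hxy

lemma muFun_lt_muFun_of_mem {S : Finset (Fin n)} {x y : Fin n}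
    (hx : x ∈ S) (hy : y ∈ S) (hxy : y < x) : muFun S x < muFun S y := by
  unfold muFun
  simp only [if_pos hx, if_pos hy]
  have h1 := cntBelow_strict hy hxy
  have h2 := cntBelow_lt_of_mem hx
  have h3 : S.card ≤ n := by
    have := Finset.card_le_univ S; simpa using this
  omega

lemma muFun_lt_muFun_cross {S : Finset (Fin n)} {x y : Fin n}
    (hx : x ∉ S) (hy : y ∈ S) : muFun S x < muFun S y := by
  unfold muFun
  simp only [if_neg hx, if_pos hy]
  have h1 : cntBelow Sᶜ x < Sᶜ.card := cntBelow_lt_of_mem (by simpa using hx)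
  have h2 : cntBelow S y < S.card := cntBelow_lt_of_mem hy
  have h3 : Sᶜ.card = n - S.card := by
    rw [Finset.card_compl]; simp
  have h4 : S.card ≤ n := by have := Finset.card_le_univ S; simpa using this
  omega

lemma muFun_injective (S : Finset (Fin n)) : Function.Injective (muFun S) := by
  intro x y h
  by_contra hne
  by_cases hx : x ∈ S <;> by_cases hy : y ∈ S
  · rcases lt_trichotomy x y with h' | h' | h'
    · exact absurd h (ne_of_gt (muFun_lt_muFun_of_mem hy hx h'))
    · exact hne h'
    · exact absurd h (ne_of_lt (muFun_lt_muFun_of_mem hx hy h'))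
  · exact absurd h (ne_of_gt (muFun_lt_muFun_cross hy hx))
  · exact absurd h (ne_of_lt (muFun_lt_muFun_cross hx hy))
  · rcases lt_trichotomy x y with h' | h' | h'
    · exact absurd h (ne_of_lt (muFun_lt_muFun_of_notmem hx hy h'))
    · exact hne h'
    · exact absurd h (ne_of_gt (muFun_lt_muFun_of_notmem hy hx h'))

/-- the permutation: increasing low values on Sᶜ, decreasing high values on S. -/
noncomputable def muPerm (S : Finset (Fin n)) : Equiv.Perm (Fin n) :=
  Equiv.ofBijective (fun x => (⟨muFun S x, muFun_lt_n x⟩ : Fin n))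
    ((Finite.injective_iff_bijective).mp (fun x y h => muFun_injective S (by
      simpa [Fin.mk.injEq] using h)))

lemma muPerm_apply (S : Finset (Fin n)) (x : Fin n) : (muPerm S x : ℕ) = muFun S x := rfl

lemma muPerm_lt_iff (S : Finset (Fin n)) (x y : Fin n) :
    muPerm S x < muPerm S y ↔
      ((x ∉ S ∧ y ∉ S ∧ x < y) ∨ (x ∈ S ∧ y ∈ S ∧ y < x) ∨ (x ∉ S ∧ y ∈ S)) := by
  have hmu : muPerm S x < muPerm S y ↔ muFun S x < muFun S y := Iff.rfl
  rw [hmu]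
  constructor
  · intro h
    by_cases hx : x ∈ S <;> by_cases hy : y ∈ S
    · refine Or.inr (Or.inl ⟨hx, hy, ?_⟩)
      rcases lt_trichotomy x y with h' | h' | h'
      · exact absurd h (not_lt.mpr (le_of_lt (muFun_lt_muFun_of_mem (x:=y) (y:=x) hy hx h')))
      · subst h'; exact absurd h (lt_irrefl _)
      · exact h'
    · exact absurd h (not_lt.mpr (le_of_lt (muFun_lt_muFun_cross (x:=y) (y:=x) hy hx)))
    · exact Or.inr (Or.inr ⟨hx, hy⟩)
    · refine Or.inl ⟨hx, hy, ?_⟩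
      rcases lt_trichotomy x y with h' | h' | h'
      · exact h'
      · subst h'; exact absurd h (lt_irrefl _)
      · exact absurd h (not_lt.mpr (le_of_lt (muFun_lt_muFun_of_notmem (x:=y) (y:=x) hy hx h')))
  · rintro (⟨hx, hy, h⟩ | ⟨hx, hy, h⟩ | ⟨hx, hy⟩)
    · exact muFun_lt_muFun_of_notmem hx hy h
    · exact muFun_lt_muFun_of_mem hx hy h
    · exact muFun_lt_muFun_cross hx hy

lemma muPerm_separable (S : Finset (Fin n)) : Separable (muPerm S) := by
  constructor
  · rintro ⟨f, hf, hiff⟩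
    have h01 : f 0 < f 1 := hf (by decide)
    have h12 : f 1 < f 2 := hf (by decide)
    have h23 : f 2 < f 3 := hf (by decide)
    have A : muPerm S (f 2) < muPerm S (f 0) := (hiff 2 0).mp (by decide)
    have B : muPerm S (f 0) < muPerm S (f 3) := (hiff 0 3).mp (by decide)
    have C : muPerm S (f 3) < muPerm S (f 1) := (hiff 3 1).mp (by decide)
    rw [muPerm_lt_iff] at A B C
    rcases A with ⟨a1,a2,a3⟩|⟨a1,a2,a3⟩|⟨a1,a2⟩ <;>
      rcases B with ⟨b1,b2,b3⟩|⟨b1,b2,b3⟩|⟨b1,b2⟩ <;>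
        rcases C with ⟨c1,c2,c3⟩|⟨c1,c2,c3⟩|⟨c1,c2⟩ <;>
          simp only [Fin.lt_def] at * <;> first | omega | tauto
  · rintro ⟨f, hf, hiff⟩
    have h01 : f 0 < f 1 := hf (by decide)
    have h12 : f 1 < f 2 := hf (by decide)
    have h23 : f 2 < f 3 := hf (by decide)
    have A : muPerm S (f 1) < muPerm S (f 3) := (hiff 1 3).mp (by decide)
    have B : muPerm S (f 3) < muPerm S (f 0) := (hiff 3 0).mp (by decide)
    have C : muPerm S (f 0) < muPerm S (f 2) := (hiff 0 2).mp (by decide)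
    rw [muPerm_lt_iff] at A B C
    rcases A with ⟨a1,a2,a3⟩|⟨a1,a2,a3⟩|⟨a1,a2⟩ <;>
      rcases B with ⟨b1,b2,b3⟩|⟨b1,b2,b3⟩|⟨b1,b2⟩ <;>
        rcases C with ⟨c1,c2,c3⟩|⟨c1,c2,c3⟩|⟨c1,c2⟩ <;>
          simp only [Fin.lt_def] at * <;> first | omega | tauto

lemma key_lemma : ∀ (k : ℕ) {n : ℕ} (σ : Equiv.Perm (Fin n)) (c : Fin n → Fin (2^k)),
    (∀ x y : Fin n, x < y → c x = c y → σ x < σ y) →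
    ∃ l : List (Equiv.Perm (Fin n)), l.length ≤ 2 * k ∧
      (∀ τ ∈ l, Separable τ) ∧ l.prod = σ := by
  intro k
  induction k with
  | zero =>
    intro n σ c hc
    refine ⟨[], by simp, by simp, ?_⟩
    have hcc : ∀ x y : Fin n, c x = c y := by
      intro x y
      have h1 := (c x).isLt
      have h2 := (c y).isLt
      have h0 : (2:ℕ)^0 = 1 := rfl
      exact Fin.ext (by omega)
    have hmono : StrictMono σ := fun x y hxy => hc x y hxy (hcc x y)
    have : σ = 1 := by
      ext x
      have hφ := Subsingleton.elim
        (StrictMono.orderIsoOfSurjective σ hmono σ.surjective) (OrderIso.refl (Fin n))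
      have h1 : σ x = (StrictMono.orderIsoOfSurjective σ hmono σ.surjective) x := by
        rw [StrictMono.coe_orderIsoOfSurjective]
      rw [hφ] at h1
      simp only [OrderIso.refl_apply] at h1
      rw [h1]
      rfl
    simp [this]
  | succ k ih =>
    intro n σ c hc
    classical
    set S : Finset (Fin n) := Finset.univ.filter (fun x => (c x).val % 2 = 1) with hSdef
    set T : Finset (Fin n) := Finset.univ.filter (fun v => (c (σ⁻¹ v)).val % 2 = 1) with hTdef
    have hS : ∀ x, x ∈ S ↔ (c x).val % 2 = 1 := by intro x; simp [hSdef]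
    have hT : ∀ x : Fin n, σ x ∈ T ↔ x ∈ S := by
      intro x; simp [hTdef, hSdef]
    set μp := muPerm S with hμp
    set μv := muPerm T with hμv
    set σ' := μv * σ * μp⁻¹ with hσ'
    have hbound : ∀ u : Fin n, (c (μp⁻¹ u)).val / 2 < 2 ^ k := by
      intro u
      have h2 : (c (μp⁻¹ u)).val < 2 ^ k * 2 := by
        rw [← pow_succ]; exact (c (μp⁻¹ u)).isLt
      omega
    set c' : Fin n → Fin (2 ^ k) := fun u => ⟨(c (μp⁻¹ u)).val / 2, hbound u⟩ with hc'
    have hstep : ∀ u w : Fin n, u < w → c' u = c' w → σ' u < σ' w := by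
      intro u w huw hcc
      set x := μp⁻¹ u with hx
      set y := μp⁻¹ w with hy
      have hux : μp x = u := by simp [hx]
      have hwy : μp y = w := by simp [hy]
      have hμlt : μp x < μp y := by rw [hux, hwy]; exact huw
      have hdiv : (c x).val / 2 = (c y).val / 2 := congrArg Fin.val hcc
      have hσ'u : σ' u = μv (σ x) := by simp [hσ', hx, Equiv.Perm.mul_apply]
      have hσ'w : σ' w = μv (σ y) := by simp [hσ', hy, Equiv.Perm.mul_apply]
      rw [hσ'u, hσ'w, muPerm_lt_iff]
      rw [muPerm_lt_iff] at hμlt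
      rcases hμlt with ⟨hx1, hy1, hxy⟩ | ⟨hx1, hy1, hxy⟩ | ⟨hx1, hy1⟩
      · have hcx : (c x).val % 2 = 0 := by
          have := (hS x).not.mp hx1; omega
        have hcy : (c y).val % 2 = 0 := by
          have := (hS y).not.mp hy1; omega
        have hcxy : c x = c y := Fin.ext (by omega)
        have : σ x < σ y := hc x y hxy hcxy
        exact Or.inl ⟨by rw [hT]; exact hx1, by rw [hT]; exact hy1, this⟩
      · have hcx := (hS x).mp hx1
        have hcy := (hS y).mp hy1
        have hcxy : c y = c x := Fin.ext (by omega)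
        have : σ y < σ x := hc y x hxy hcxy
        exact Or.inr (Or.inl ⟨(hT x).mpr hx1, (hT y).mpr hy1, this⟩)
      · exact Or.inr (Or.inr ⟨by rw [hT]; exact hx1, (hT y).mpr hy1⟩)
    obtain ⟨l', hlen, hsep, hprod⟩ := ih σ' c' hstep
    refine ⟨μv⁻¹ :: (l' ++ [μp]), ?_, ?_, ?_⟩
    · simp only [List.length_cons, List.length_append, List.length_singleton,
        List.length_nil]
      omega
    · intro τ hτ
      rcases List.mem_cons.mp hτ with rfl | hτ'
      · exact Separable.inv (muPerm_separable T)
      rcases List.mem_append.mp hτ' with h | h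
      · exact hsep τ h
      · rw [List.mem_singleton] at h
        subst h
        exact muPerm_separable S
    · rw [List.prod_cons, List.prod_append, List.prod_singleton, hprod, hσ']
      group

lemma exists_biorderPerm {n : ℕ} (σ : Equiv.Perm (Fin n)) (A : Set (Fin n)) :
    ∃ (m : ℕ) (τ : Equiv.Perm (Fin m)),
      BiorderPerm (· < ·) (fun a b => σ a < σ b) A τ := by
  classical
  set F : Finset (Fin n) := (Set.toFinite A).toFinset with hF
  have hmemF : ∀ x, x ∈ F ↔ x ∈ A := by intro x; simp [hF, Set.Finite.mem_toFinset]
  set m := F.card with hm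
  set eIso := F.orderIsoOfFin rfl with heIso
  set G : Finset (Fin n) := F.image σ with hG
  have hcard : G.card = m := Finset.card_image_of_injective F σ.injective
  set gIso := G.orderIsoOfFin hcard with hgIso
  have hbij : Function.Bijective
      (fun x : {x // x ∈ F} => (⟨σ x, Finset.mem_image_of_mem σ x.2⟩ : {v // v ∈ G})) := by
    rw [Fintype.bijective_iff_injective_and_card]
    constructor
    · intro a b hab
      have : σ (a : Fin n) = σ (b : Fin n) := congrArg Subtype.val hab
      exact Subtype.ext (σ.injective this)
    · rw [Fintype.card_coe, Fintype.card_coe, hcard]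
  set mapE := Equiv.ofBijective _ hbij with hmapE
  set τ : Equiv.Perm (Fin m) :=
    (eIso.toEquiv.trans mapE).trans gIso.toEquiv.symm with hτ
  have hτapp : ∀ i : Fin m, (gIso (τ i) : Fin n) = σ (eIso i : Fin n) := by
    intro i
    simp [hτ, hmapE]
  refine ⟨m, τ, fun i => (eIso i : Fin n), ?_, ?_, ?_, ?_⟩
  · intro i
    exact (hmemF _).mp (eIso i).2
  · intro x hx
    refine ⟨eIso.symm ⟨x, (hmemF x).mpr hx⟩, ?_⟩
    simp
  · intro i j
    constructor
    · intro hij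
      exact Subtype.coe_lt_coe.mpr (eIso.lt_iff_lt.mpr hij)
    · intro hij
      exact eIso.lt_iff_lt.mp (Subtype.coe_lt_coe.mp hij)
  · intro i j
    have h1 : τ i < τ j ↔ gIso (τ i) < gIso (τ j) := (gIso.lt_iff_lt).symm
    have h2 : gIso (τ i) < gIso (τ j) ↔ (gIso (τ i) : Fin n) < (gIso (τ j) : Fin n) :=
      Subtype.coe_lt_coe.symm
    rw [h1, h2, hτapp i, hτapp j]

end Aux

/-- Every `2^k`-shuffle (of identity permutations) is a product of at most `2k`
separable permutations. -/
theorem shuffle_of_identities_decomposition (k : ℕ) {n : ℕ} (σ : Equiv.Perm (Fin n))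
    (h : ShuffleOf (2 ^ k) (fun _ τ => τ = 1) σ) :
    ∃ l : List (Equiv.Perm (Fin n)), l.length ≤ 2 * k ∧
      (∀ τ ∈ l, Separable τ) ∧ l.prod = σ := by
  classical
  obtain ⟨X, hX, hid⟩ := h
  have hex : ∀ x : Fin n, ∃ i, x ∈ X i := fun x => (hX x).exists
  choose c hcmem using hex
  apply key_lemma k σ c
  intro x y hxy hcc
  obtain ⟨m, τ, hB⟩ := exists_biorderPerm σ (X (c x))
  have hτ : τ = 1 := hid (c x) m τ hB
  obtain ⟨e, he1, he2, he3, he4⟩ := hB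
  obtain ⟨a, ha⟩ := he2 x (hcmem x)
  obtain ⟨b, hb⟩ := he2 y (by rw [hcc]; exact hcmem y)
  have hab : a < b := (he3 a b).mpr (by rw [ha, hb]; exact hxy)
  have hτab : τ a < τ b := by rw [hτ]; simpa using hab
  have := (he4 a b).mp hτab
  rwa [ha, hb] at this
end

section
/- If C and D are substitution-closed classes of permutations, then the classes C ∘ D = {σ ∘ τ : σ ∈ C, τ ∈ D of the same size} and C⁻¹ = {σ⁻¹ : σ ∈ C} are also substitution-closed. -/
/-!
An inflation `τ[α₁, …, αₘ]` of size `n` is the same thing as a permutation `F ∘ (⊕ᵢ αᵢ) ∘ E⁻¹`,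
where `E` and `F` enumerate the disjoint union `Σ i, Fin (ns i)` by `Fin n`, block by block, with
the blocks taken in their natural order for `E` and in the order given by `τ` for `F`. In this
description inversion and composition only permute the blocks:
`τ[αᵢ]⁻¹ = τ⁻¹[α_{τ⁻¹ k}⁻¹]`, and `(τ₁τ₂)[βᵢγᵢ] = τ₁[β_{τ₂⁻¹ k}] ∘ τ₂[γᵢ]`, where the middle
enumeration of the second identity lists the blocks in the order given by `τ₂`.
-/

open Equiv

section BlockEnum

variable {ι ι' κ : Type*} {ns : ι → ℕ} {n : ℕ}

structure IsBlockEnum [LT κ] (ρ : ι → κ) (E : (Σ i, Fin (ns i)) ≃ Fin n) : Prop where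
  lt_iff_of_eq : ∀ (i : ι) (a b : Fin (ns i)), E ⟨i, a⟩ < E ⟨i, b⟩ ↔ a < b
  lt_iff_of_ne : ∀ p q : Σ i, Fin (ns i), p.1 ≠ q.1 → (E p < E q ↔ ρ p.1 < ρ q.1)

theorem isBlockEnum_sigmaCongrLeft_trans_iff [LT κ] (e : ι' ≃ ι) {ρ : ι → κ}
    {E : (Σ i, Fin (ns i)) ≃ Fin n} :
    IsBlockEnum (ρ ∘ e) ((sigmaCongrLeft e).trans E) ↔ IsBlockEnum ρ E := by
  constructor
  · rintro ⟨hin, hout⟩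
    refine ⟨fun i a b => ?_, (sigmaCongrLeft e).surjective.forall₂.2 fun p q hpq => ?_⟩
    · obtain ⟨k, rfl⟩ := e.surjective i
      exact hin k a b
    · exact hout p q (ne_of_apply_ne e hpq)
  · rintro ⟨hin, hout⟩
    exact ⟨fun k => hin (e k), fun p q hpq => hout _ _ (e.injective.ne hpq)⟩

theorem exists_isBlockEnum_id [Fintype ι] [LinearOrder ι]
    (h : Fintype.card (Σ i, Fin (ns i)) = n) :
    ∃ E : (Σ i, Fin (ns i)) ≃ Fin n, IsBlockEnum id E := by
  let oe := monoEquivOfFin (Σₗ i, Fin (ns i)) h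
  refine ⟨toLex.trans oe.symm.toEquiv, fun i a b => ?_, fun p q hpq => ?_⟩
  · change oe.symm (toLex ⟨i, a⟩) < oe.symm (toLex ⟨i, b⟩) ↔ _
    rw [OrderIso.lt_iff_lt]
    change Sigma.Lex (· < ·) (fun _ => (· < ·)) (⟨i, a⟩ : Σ i, Fin (ns i)) ⟨i, b⟩ ↔ _
    simp [Sigma.lex_iff]
  · change oe.symm (toLex p) < oe.symm (toLex q) ↔ _
    rw [OrderIso.lt_iff_lt, Sigma.Lex.lt_def]
    exact or_iff_left fun ⟨h, _⟩ => hpq h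

theorem exists_isBlockEnum [Fintype ι] [Fintype κ] [LinearOrder κ] (e : ι ≃ κ)
    (h : Fintype.card (Σ i, Fin (ns i)) = n) :
    ∃ E : (Σ i, Fin (ns i)) ≃ Fin n, IsBlockEnum e E := by
  obtain ⟨E₀, hE₀⟩ := exists_isBlockEnum_id (ns := fun k => ns (e.symm k))
    ((Fintype.card_congr (sigmaCongrLeft e.symm)).trans h)
  refine ⟨(sigmaCongrLeft e.symm).symm.trans E₀, ?_⟩
  rwa [← isBlockEnum_sigmaCongrLeft_trans_iff e.symm, e.self_comp_symm, ← trans_assoc,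
    self_trans_symm, refl_trans]

end BlockEnum

section Inflation

variable {m n : ℕ} {τ : Perm (Fin m)} {ns : Fin m → ℕ} {α : ∀ i, Perm (Fin (ns i))}
  {σ : Perm (Fin n)}

theorem IsInflation.exists_isBlockEnum (h : IsInflation τ ns α σ) :
    (∀ i, 0 < ns i) ∧ ∃ E F : (Σ i, Fin (ns i)) ≃ Fin n,
      IsBlockEnum id E ∧ IsBlockEnum τ F ∧ ∀ p, σ (E p) = F (sigmaCongrRight α p) := by
  obtain ⟨g, hg, hgs, hblock, hout⟩ := h
  choose e he_mem he_cover he_lt he_val using hblock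
  have hg_e : ∀ i a, g (e i a) = i := he_mem
  have hpos : ∀ i, 0 < ns i := fun i => by
    obtain ⟨x, hx⟩ := hgs i
    exact (he_cover i x hx).choose.pos
  have hinj : Function.Injective fun p : Σ i, Fin (ns i) => e p.1 p.2 := by
    rintro ⟨i, a⟩ ⟨j, b⟩ hab
    obtain rfl : i = j := (hg_e i a).symm.trans ((congrArg g hab).trans (hg_e j b))
    rcases lt_trichotomy a b with h | rfl | h
    · exact absurd hab ((he_lt i a b).1 h).ne
    · rfl
    · exact absurd hab ((he_lt i b a).1 h).ne'
  let E := Equiv.ofBijective _ ⟨hinj, fun x => ⟨⟨g x, _⟩, (he_cover (g x) x rfl).choose_spec⟩⟩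
  have hE_apply : ∀ p, E p = e p.1 p.2 := fun _ => rfl
  have hE : IsBlockEnum id E := by
    refine ⟨fun i a b => (he_lt i a b).symm, fun ⟨i, a⟩ ⟨j, b⟩ hij => ⟨fun h => ?_, fun h => ?_⟩⟩
    · exact lt_of_le_of_ne (by simpa [hE_apply, hg_e] using hg h.le) hij
    · exact hg.reflect_lt (by simpa [hE_apply, hg_e] using h)
  refine ⟨hpos, E, (sigmaCongrRight α).symm.trans (E.trans σ), hE, ⟨fun i a b => ?_, ?_⟩, ?_⟩
  · simpa [hE_apply] using (he_val i ((α i).symm a) ((α i).symm b)).symm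
  · rintro ⟨i, a⟩ ⟨j, b⟩ hij
    simpa [hE_apply, hg_e] using
      hout (e i ((α i).symm a)) (e j ((α j).symm b)) (by simpa [hg_e] using hij)
  · intro p
    simp

theorem isInflation_of_isBlockEnum (hpos : ∀ i, 0 < ns i) {E F : (Σ i, Fin (ns i)) ≃ Fin n}
    (hE : IsBlockEnum id E) (hF : IsBlockEnum τ F)
    (hσ : ∀ p, σ (E p) = F (sigmaCongrRight α p)) : IsInflation τ ns α σ := by
  refine ⟨fun x => (E.symm x).1, ?_, fun i => ⟨E ⟨i, ⟨0, hpos i⟩⟩, by simp⟩, fun i => ?_, ?_⟩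
  · refine E.surjective.forall₂.2 fun p q hpq => ?_
    simp only [symm_apply_apply]
    by_contra! hlt
    exact hpq.not_gt ((hE.lt_iff_of_ne q p hlt.ne).2 hlt)
  · refine ⟨fun a => E ⟨i, a⟩, fun a => by simp, fun x hx => ?_,
      fun a b => (hE.lt_iff_of_eq i a b).symm, fun a b => ?_⟩
    · obtain ⟨⟨j, a⟩, rfl⟩ := E.surjective x
      obtain rfl : j = i := by simpa using hx
      exact ⟨a, rfl⟩
    · change α i a < α i b ↔ σ (E ⟨i, a⟩) < σ (E ⟨i, b⟩)
      rw [hσ, hσ]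
      exact (hF.lt_iff_of_eq i _ _).symm
  · refine E.surjective.forall₂.2 fun p q hpq => ?_
    simp only [symm_apply_apply] at hpq ⊢
    rw [hσ, hσ]
    exact hF.lt_iff_of_ne _ _ hpq

theorem IsInflation.inv (h : IsInflation τ ns α σ) :
    IsInflation τ⁻¹ (fun k => ns (τ⁻¹ k)) (fun k => (α (τ⁻¹ k))⁻¹) σ⁻¹ := by
  obtain ⟨hpos, E, F, hE, hF, hσ⟩ := h.exists_isBlockEnum
  refine isInflation_of_isBlockEnum (fun _ => hpos _) (E := (sigmaCongrLeft τ⁻¹).trans F)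
    (F := (sigmaCongrLeft τ⁻¹).trans E) ?_ ((isBlockEnum_sigmaCongrLeft_trans_iff τ⁻¹).2 hE) ?_
  · rw [← isBlockEnum_sigmaCongrLeft_trans_iff τ⁻¹] at hF
    simpa using hF
  · rintro ⟨k, b⟩
    rw [Perm.inv_eq_iff_eq]
    simp [hσ]

theorem IsInflation.exists_eq_mul {τ₁ τ₂ : Perm (Fin m)} {β γ : ∀ i, Perm (Fin (ns i))}
    (h : IsInflation (τ₁ * τ₂) ns (fun i => β i * γ i) σ) :
    ∃ σ₁ σ₂ : Perm (Fin n), IsInflation τ₁ (fun k => ns (τ₂⁻¹ k)) (fun k => β (τ₂⁻¹ k)) σ₁ ∧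
      IsInflation τ₂ ns γ σ₂ ∧ σ = σ₁ * σ₂ := by
  obtain ⟨hpos, E, F, hE, hF, hσ⟩ := h.exists_isBlockEnum
  obtain ⟨G, hG⟩ := _root_.exists_isBlockEnum τ₂ ((Fintype.card_congr E).trans (Fintype.card_fin n))
  refine ⟨G.symm.trans ((sigmaCongrRight β).trans F), E.symm.trans ((sigmaCongrRight γ).trans G),
    isInflation_of_isBlockEnum (fun _ => hpos _) (E := (sigmaCongrLeft τ₂⁻¹).trans G)
      (F := (sigmaCongrLeft τ₂⁻¹).trans F) ?_ ?_ fun p => by simp,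
    isInflation_of_isBlockEnum hpos hE hG fun p => by simp, ?_⟩
  · rw [← isBlockEnum_sigmaCongrLeft_trans_iff τ₂⁻¹] at hG
    simpa using hG
  · rw [← isBlockEnum_sigmaCongrLeft_trans_iff τ₂⁻¹, Perm.coe_mul, Function.comp_assoc] at hF
    simpa using hF
  · ext1 x
    obtain ⟨p, rfl⟩ := E.surjective x
    simp [hσ]

end Inflation

theorem ClosedUnderSubstitution.inv {C : PermClass} (hC : ClosedUnderSubstitution C) :
    ClosedUnderSubstitution C.inv :=
  fun _ τ _ _ _ _ hτ hα hσ => hC _ τ⁻¹ _ _ _ _ hτ (fun _ => hα _) hσ.inv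

theorem ClosedUnderSubstitution.comp {C D : PermClass} (hC : ClosedUnderSubstitution C)
    (hD : ClosedUnderSubstitution D) : ClosedUnderSubstitution (C.comp D) := by
  rintro m _ ns α n σ ⟨τ₁, τ₂, hτ₁, hτ₂, rfl⟩ hα hσ
  choose β γ hβ hγ hα_eq using hα
  obtain rfl : α = fun i => β i * γ i := funext hα_eq
  obtain ⟨σ₁, σ₂, h₁, h₂, rfl⟩ := hσ.exists_eq_mul
  exact ⟨σ₁, σ₂, hC _ _ _ _ _ _ hτ₁ (fun _ => hβ _) h₁, hD _ _ _ _ _ _ hτ₂ hγ h₂, rfl⟩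

/-- If `C` and `D` are substitution-closed classes of permutations, then so are
`C ∘ D` and `C⁻¹`. -/
theorem comp_and_inv_substitution_closed (C D : PermClass)
    (hC : ClosedUnderSubstitution C) (hD : ClosedUnderSubstitution D) :
    ClosedUnderSubstitution (C.comp D) ∧ ClosedUnderSubstitution C.inv :=
  ⟨hC.comp hD, hC.inv⟩
end

section
/- Let ℐ be a family of intervals of a linear order whose overlap graph is K_t-free and K_{t,t}-subgraph-free. Then the overlap graph of ℐ has maximum edge density at most 2(t−1)². -/
/-!
Orient each overlapping pair of intervals so that `A` starts first (`LeftOverlap A B`), let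
`k = t - 1`, and call the pair deep if `B` lies strictly inside at least `k` members of `S` that
overlap `A`. Charge a shallow pair to `A` and a deep pair to `B`.

The shallow right neighbours of `A` pairwise intersect, so an antichain of them (for `⊆`) is a
clique of the overlap graph, while a chain of `k + 1` of them would make its least member deep:
by Mirsky's theorem there are at most `k²` of them. The deep left neighbours of `B` pairwise
intersect as well, and a chain `A₁ ⊆ ⋯ ⊆ A_{k+1}` of them overlaps `B` together with the `k`
supersets of `B` witnessing that `(A₁, B)` is deep, a `K_{k+1,k+1}`. So there are at most
`2k²|S|` oriented pairs, and every overlapping pair is oriented one way or the other.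
-/

/-- Two sets overlap: they intersect but neither contains the other. -/
def Overlap {α : Type*} (A B : Set α) : Prop :=
  (A ∩ B).Nonempty ∧ ¬ A ⊆ B ∧ ¬ B ⊆ A

open Finset

namespace Finset

section Order

variable {β : Type*} [PartialOrder β]

theorem exists_forall_le_of_isChain {C : Finset β} (hne : C.Nonempty)
    (hC : IsChain (· ≤ ·) (C : Set β)) : ∃ m ∈ C, ∀ x ∈ C, m ≤ x := by
  obtain ⟨m, hm⟩ := exists_minimal hne
  refine ⟨m, hm.1, fun x hx => ?_⟩
  rcases eq_or_ne m x with rfl | hmx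
  · exact le_rfl
  · exact (hC hm.1 hx hmx).elim id (hm.2 hx)

/-- Mirsky's theorem. -/
theorem card_le_mul_of_isChain_of_isAntichain {a b : ℕ} (F : Finset β)
    (hchain : ∀ C ⊆ F, IsChain (· ≤ ·) (C : Set β) → #C ≤ a)
    (hanti : ∀ C ⊆ F, IsAntichain (· ≤ ·) (C : Set β) → #C ≤ b) : #F ≤ a * b := by
  classical
  induction a generalizing F with
  | zero =>
    rcases F.eq_empty_or_nonempty with rfl | ⟨x, hx⟩
    · simp
    · simpa using hchain {x} (singleton_subset_iff.2 hx) (by simp)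
  | succ a ih =>
    -- The minimal elements form an antichain, and removing them shortens every chain.
    set M := {x ∈ F | Minimal (· ∈ F) x}
    have hM : #M ≤ b := hanti M (filter_subset _ _)
      ((setOfPred_minimal_antichain _).subset fun x hx => (mem_filter.1 hx).2)
    have hrest : #(F \ M) ≤ a * b := by
      refine ih _ (fun C hC hCchain => ?_) fun C hC => hanti C (hC.trans sdiff_subset)
      rcases C.eq_empty_or_nonempty with rfl | hne
      · simp
      obtain ⟨c, hc, hcle⟩ := exists_forall_le_of_isChain hne hCchain
      have hcF : c ∈ F := (mem_sdiff.1 (hC hc)).1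
      obtain ⟨y, hyc, hyF⟩ := (not_minimal_iff_exists_lt hcF).1
        fun hmin => (mem_sdiff.1 (hC hc)).2 (mem_filter.2 ⟨hcF, hmin⟩)
      have hyC : y ∉ C := fun hy => (hcle y hy).not_gt hyc
      have hlonger := hchain (insert y C) (insert_subset hyF (hC.trans sdiff_subset)) <| by
        rw [coe_insert]
        exact hCchain.insert fun z hz _ => .inl (hyc.le.trans (hcle z hz))
      rw [card_insert_of_notMem hyC] at hlonger
      omega
    calc #F = #(F \ M) + #M := (card_sdiff_add_card_eq_card (filter_subset _ _)).symm
      _ ≤ a * b + b := add_le_add hrest hM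
      _ = (a + 1) * b := by ring

end Order

variable {β γ : Type*}

theorem card_filter_product_le_of_forall_left {s : Finset β} {t : Finset γ}
    (r : β → γ → Prop) [∀ a b, Decidable (r a b)] {n : ℕ}
    (h : ∀ a ∈ s, #{b ∈ t | r a b} ≤ n) : #{p ∈ s ×ˢ t | r p.1 p.2} ≤ #s * n := by
  rw [card_filter, sum_product, ← smul_eq_mul]
  exact sum_le_card_nsmul _ _ _ fun a ha => (card_filter _ _).symm.trans_le (h a ha)

theorem card_filter_product_le_of_forall_right {s : Finset β} {t : Finset γ}
    (r : β → γ → Prop) [∀ a b, Decidable (r a b)] {n : ℕ}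
    (h : ∀ b ∈ t, #{a ∈ s | r a b} ≤ n) : #{p ∈ s ×ˢ t | r p.1 p.2} ≤ #t * n := by
  rw [card_filter, sum_product_right, ← smul_eq_mul]
  exact sum_le_card_nsmul _ _ _ fun b hb => (card_filter _ _).symm.trans_le (h b hb)

theorem card_le_of_not_exists_pairwise {I : Set β} {r : β → β → Prop} {k : ℕ}
    (h : ¬ ∃ s : Finset β, ↑s ⊆ I ∧ #s = k + 1 ∧ ∀ A ∈ s, ∀ B ∈ s, A ≠ B → r A B)
    {C : Finset β} (hC : ↑C ⊆ I) (hr : (C : Set β).Pairwise r) : #C ≤ k := by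
  by_contra! hk
  obtain ⟨s, hsC, hs⟩ := exists_subset_card_eq hk
  exact h ⟨s, (coe_subset.2 hsC).trans hC, hs, hr.mono (coe_subset.2 hsC)⟩

theorem card_le_or_card_le_of_not_exists_complete {I : Set β} {r : β → β → Prop} {k : ℕ}
    (hirr : ∀ A, ¬ r A A)
    (h : ¬ ∃ s₁ s₂ : Finset β, ↑s₁ ⊆ I ∧ ↑s₂ ⊆ I ∧
      #s₁ = k + 1 ∧ #s₂ = k + 1 ∧ Disjoint s₁ s₂ ∧ ∀ A ∈ s₁, ∀ B ∈ s₂, r A B)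
    {C D : Finset β} (hC : ↑C ⊆ I) (hD : ↑D ⊆ I) (hr : ∀ A ∈ C, ∀ B ∈ D, r A B) :
    #C ≤ k ∨ #D ≤ k := by
  by_contra! hk
  obtain ⟨s₁, hs₁C, hs₁⟩ := exists_subset_card_eq hk.1
  obtain ⟨s₂, hs₂D, hs₂⟩ := exists_subset_card_eq hk.2
  refine h ⟨s₁, s₂, (coe_subset.2 hs₁C).trans hC, (coe_subset.2 hs₂D).trans hD, hs₁, hs₂,
    disjoint_left.2 fun A h₁ h₂ => hirr A (hr A (hs₁C h₁) A (hs₂D h₂)),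
    fun A hA B hB => hr A (hs₁C hA) B (hs₂D hB)⟩

end Finset

namespace Set.OrdConnected

variable {α : Type*} [LinearOrder α] {S : Set α} {x y z : α}

theorem lt_of_le_of_notMem (hS : S.OrdConnected) (hx : x ∈ S) (hxy : x ≤ y) (hy : y ∉ S)
    (hz : z ∈ S) : z < y :=
  lt_of_not_ge fun hyz => hy (hS.out hx hz ⟨hxy, hyz⟩)

theorem lt_of_notMem_of_le (hS : S.OrdConnected) (hx : x ∈ S) (hyx : y ≤ x) (hy : y ∉ S)
    (hz : z ∈ S) : y < z :=
  lt_of_not_ge fun hzy => hy (hS.out hz hx ⟨hzy, hyx⟩)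

end Set.OrdConnected

section Overlap

variable {α : Type*} {A A' B B' : Set α}

theorem Overlap.ne (h : Overlap A B) : A ≠ B := by
  rintro rfl
  exact h.2.1 subset_rfl

theorem Overlap.mono_left (h : Overlap A' B) (hA : A' ⊆ A) (hBA : ¬ B ⊆ A) : Overlap A B :=
  ⟨h.1.mono (Set.inter_subset_inter_left B hA), fun hAB => h.2.1 (hA.trans hAB), hBA⟩

theorem IsAntichain.pairwise_overlap {C : Set (Set α)} (hC : IsAntichain (· ≤ ·) C)
    (hinter : C.Pairwise fun A B => (A ∩ B).Nonempty) : C.Pairwise Overlap :=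
  fun _ hA _ hB hAB => ⟨hinter hA hB hAB, hC hA hB hAB, hC hB hA hAB.symm⟩

variable [LinearOrder α]

def LeftOverlap (A B : Set α) : Prop :=
  (A ∩ B).Nonempty ∧ (∃ a ∈ A, ∀ x ∈ B, a < x) ∧ (∃ b ∈ B, ∀ y ∈ A, y < b)

theorem LeftOverlap.overlap (h : LeftOverlap A B) : Overlap A B := by
  obtain ⟨hAB, ⟨a, ha, haB⟩, ⟨b, hb, hbA⟩⟩ := h
  exact ⟨hAB, fun hs => (haB a (hs ha)).false, fun hs => (hbA b (hs hb)).false⟩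

theorem Overlap.leftOverlap_or_leftOverlap (hA : A.OrdConnected) (hB : B.OrdConnected)
    (h : Overlap A B) : LeftOverlap A B ∨ LeftOverlap B A := by
  obtain ⟨hAB, hAB', hBA'⟩ := h
  obtain ⟨a, haA, haB⟩ := Set.not_subset.1 hAB'
  obtain ⟨b, hbB, hbA⟩ := Set.not_subset.1 hBA'
  rcases le_total a b with hab | hba
  · exact .inl ⟨hAB, ⟨a, haA, fun x => hB.lt_of_notMem_of_le hbB hab haB⟩,
      ⟨b, hbB, fun y => hA.lt_of_le_of_notMem haA hab hbA⟩⟩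
  · exact .inr ⟨Set.inter_comm A B ▸ hAB, ⟨b, hbB, fun x => hA.lt_of_notMem_of_le haA hba hbA⟩,
      ⟨a, haA, fun y => hB.lt_of_le_of_notMem hbB hba haB⟩⟩

theorem LeftOverlap.inter_nonempty_right (hB : B.OrdConnected) (hB' : B'.OrdConnected)
    (h : LeftOverlap A B) (h' : LeftOverlap A B') : (B ∩ B').Nonempty := by
  obtain ⟨⟨c, hcA, hcB⟩, -, ⟨b, hbB, hbA⟩⟩ := h
  obtain ⟨⟨c', hc'A, hc'B⟩, -, ⟨b', hb'B, hb'A⟩⟩ := h'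
  rcases le_total c c' with hcc | hcc
  · exact ⟨c', hB.out hcB hbB ⟨hcc, (hbA c' hc'A).le⟩, hc'B⟩
  · exact ⟨c, hcB, hB'.out hc'B hb'B ⟨hcc, (hb'A c hcA).le⟩⟩

theorem LeftOverlap.inter_nonempty_left (hA : A.OrdConnected) (hA' : A'.OrdConnected)
    (h : LeftOverlap A B) (h' : LeftOverlap A' B) : (A ∩ A').Nonempty := by
  obtain ⟨⟨c, hcA, hcB⟩, ⟨a, haA, haB⟩, -⟩ := h
  obtain ⟨⟨c', hc'A, hc'B⟩, ⟨a', ha'A, ha'B⟩, -⟩ := h'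
  rcases le_total c c' with hcc | hcc
  · exact ⟨c, hcA, hA'.out ha'A hc'A ⟨(ha'B c hcB).le, hcc⟩⟩
  · exact ⟨c', hA.out haA hcA ⟨(haB c' hc'B).le, hcc⟩, hc'A⟩

end Overlap

section Family

open Classical

variable {α : Type*} [LinearOrder α]

def IsDeep (S : Finset (Set α)) (k : ℕ) (A B : Set α) : Prop :=
  k ≤ #{B' ∈ S | B ⊂ B' ∧ Overlap A B'}

theorem card_overlap_pairs_le {S : Finset (Set α)} (hS : ∀ A ∈ S, A.OrdConnected) :
    #{p ∈ S ×ˢ S | Overlap p.1 p.2} ≤ 2 * #{p ∈ S ×ˢ S | LeftOverlap p.1 p.2} := by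
  set L := {p ∈ S ×ˢ S | LeftOverlap p.1 p.2}
  have hsub : {p ∈ S ×ˢ S | Overlap p.1 p.2} ⊆ L ∪ L.image Prod.swap := by
    intro p hp
    obtain ⟨hpS, hp⟩ := mem_filter.1 hp
    rcases hp.leftOverlap_or_leftOverlap (hS _ (mem_product.1 hpS).1)
      (hS _ (mem_product.1 hpS).2) with h | h
    · exact mem_union_left _ (mem_filter.2 ⟨hpS, h⟩)
    · exact mem_union_right _ (mem_image.2 ⟨p.swap, mem_filter.2 ⟨mem_product.2
        ⟨(mem_product.1 hpS).2, (mem_product.1 hpS).1⟩, h⟩, p.swap_swap⟩)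
  calc _ ≤ #(L ∪ L.image Prod.swap) := card_le_card hsub
    _ ≤ #L + #L := (card_union_le _ _).trans (add_le_add_right card_image_le _)
    _ = 2 * #L := (two_mul _).symm

variable {S : Finset (Set α)} {k : ℕ} (hS : ∀ A ∈ S, A.OrdConnected)
  (hclique : ∀ C ⊆ S, (C : Set (Set α)).Pairwise Overlap → #C ≤ k)
include hS hclique

theorem card_shallow_leftOverlap_le (A : Set α) :
    #{B ∈ S | LeftOverlap A B ∧ ¬ IsDeep S k A B} ≤ k * k := by
  refine card_le_mul_of_isChain_of_isAntichain _ (fun C hC hchain => ?_) fun C hC hanti => ?_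
  · by_contra! hk
    obtain ⟨B₀, hB₀, hB₀le⟩ := exists_forall_le_of_isChain (card_pos.1 (by omega)) hchain
    refine (mem_filter.1 (hC hB₀)).2.2
      (le_trans ?_ (card_le_card (s := C.erase B₀) fun B hB => ?_))
    · rw [card_erase_of_mem hB₀]
      omega
    · obtain ⟨hne, hBC⟩ := mem_erase.1 hB
      obtain ⟨hBS, hAB, -⟩ := mem_filter.1 (hC hBC)
      exact mem_filter.2 ⟨hBS, (hB₀le B hBC).lt_of_ne hne.symm, hAB.overlap⟩
  · have hCS := hC.trans (filter_subset _ _)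
    refine hclique C hCS (hanti.pairwise_overlap fun B hB B' hB' _ => ?_)
    exact (mem_filter.1 (hC hB)).2.1.inter_nonempty_right (hS B (hCS hB)) (hS B' (hCS hB'))
      (mem_filter.1 (hC hB')).2.1

theorem card_deep_leftOverlap_le
    (hbiclique : ∀ C ⊆ S, ∀ D ⊆ S, (∀ A ∈ C, ∀ B ∈ D, Overlap A B) → #C ≤ k ∨ #D ≤ k)
    {B : Set α} (hB : B ∈ S) : #{A ∈ S | LeftOverlap A B ∧ IsDeep S k A B} ≤ k * k := by
  refine card_le_mul_of_isChain_of_isAntichain _ (fun C hC hchain => ?_) fun C hC hanti => ?_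
  · by_contra! hk
    obtain ⟨A₁, hA₁, hA₁le⟩ := exists_forall_le_of_isChain (card_pos.1 (by omega)) hchain
    set T := {B' ∈ S | B ⊂ B' ∧ Overlap A₁ B'}
    have hT : k ≤ #T := (mem_filter.1 (hC hA₁)).2.2
    have hBT : B ∉ T := fun h => (mem_filter.1 h).2.1.ne rfl
    have hcomplete : ∀ A ∈ C, ∀ B' ∈ insert B T, Overlap A B' := by
      intro A hA B' hB'
      have hAB := (mem_filter.1 (hC hA)).2.1
      rcases mem_insert.1 hB' with rfl | hB'T
      · exact hAB.overlap
      · obtain ⟨-, hBB', hA₁B'⟩ := mem_filter.1 hB'T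
        exact hA₁B'.mono_left (hA₁le A hA) fun h => hAB.overlap.2.2 (hBB'.subset.trans h)
    rcases hbiclique C (hC.trans (filter_subset _ _)) (insert B T)
      (insert_subset hB (filter_subset _ _)) hcomplete with h | h
    · omega
    · rw [card_insert_of_notMem hBT] at h
      omega
  · have hCS := hC.trans (filter_subset _ _)
    refine hclique C hCS (hanti.pairwise_overlap fun A hA A' hA' _ => ?_)
    exact (mem_filter.1 (hC hA)).2.1.inter_nonempty_left (hS A (hCS hA)) (hS A' (hCS hA'))
      (mem_filter.1 (hC hA')).2.1

theorem card_leftOverlap_pairs_le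
    (hbiclique : ∀ C ⊆ S, ∀ D ⊆ S, (∀ A ∈ C, ∀ B ∈ D, Overlap A B) → #C ≤ k ∨ #D ≤ k) :
    #{p ∈ S ×ˢ S | LeftOverlap p.1 p.2} ≤ 2 * (k * k) * #S := by
  rw [← card_filter_add_card_filter_not (fun p => IsDeep S k p.1 p.2), filter_filter,
    filter_filter]
  have hdeep := card_filter_product_le_of_forall_right (s := S) (t := S) _
    fun B hB => card_deep_leftOverlap_le hS hclique hbiclique hB
  have hshallow := card_filter_product_le_of_forall_left (s := S) (t := S) _
    fun A _ => card_shallow_leftOverlap_le hS hclique A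
  linarith

end Family

-- Ordered pairs count each edge twice, hence `4(t-1)²` for edge density `2(t-1)²`.
/-- Circle graphs (overlap graphs of families of intervals of a linear order) that are
`K_t`-free and `K_{t,t}`-subgraph-free have maximum edge density at most `2(t-1)²`:
for any finite set `S` of vertices, the number of ordered adjacent pairs inside `S`
(which is twice the number of edges) is at most `4(t-1)²·|S|`. -/
theorem circle_graph_edge_density {α : Type*} [LinearOrder α] (t : ℕ) (I : Set (Set α))
    (hint : ∀ A ∈ I, A.OrdConnected)
    (hKt : ¬ ∃ s : Finset (Set α), ↑s ⊆ I ∧ s.card = t ∧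
      ∀ A ∈ s, ∀ B ∈ s, A ≠ B → Overlap A B)
    (hKtt : ¬ ∃ s₁ s₂ : Finset (Set α), ↑s₁ ⊆ I ∧ ↑s₂ ⊆ I ∧
      s₁.card = t ∧ s₂.card = t ∧ Disjoint s₁ s₂ ∧ ∀ A ∈ s₁, ∀ B ∈ s₂, Overlap A B) :
    ∀ S : Finset (Set α), ↑S ⊆ I →
      ({p : Set α × Set α | p.1 ∈ S ∧ p.2 ∈ S ∧ Overlap p.1 p.2}).ncard
        ≤ 4 * (t - 1) ^ 2 * S.card := by
  classical
  intro S hSI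
  obtain ⟨k, rfl⟩ : ∃ k, t = k + 1 :=
    Nat.exists_eq_add_one.2 (Nat.pos_of_ne_zero (by rintro rfl; exact hKt ⟨∅, by simp⟩))
  have hsub {C : Finset (Set α)} (hC : C ⊆ S) : ↑C ⊆ I := (coe_subset.2 hC).trans hSI
  have hpairs : {p : Set α × Set α | p.1 ∈ S ∧ p.2 ∈ S ∧ Overlap p.1 p.2} =
      ↑{p ∈ S ×ˢ S | Overlap p.1 p.2} := by
    ext p
    simp [and_assoc]
  rw [hpairs, Set.ncard_coe_finset, Nat.add_sub_cancel]
  calc _ ≤ 2 * #{p ∈ S ×ˢ S | LeftOverlap p.1 p.2} :=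
        card_overlap_pairs_le fun A hA => hint A (hSI hA)
    _ ≤ 2 * (2 * (k * k) * #S) := Nat.mul_le_mul_left 2 <|
        card_leftOverlap_pairs_le (fun A hA => hint A (hSI hA))
          (fun C hC => card_le_of_not_exists_pairwise hKt (hsub hC))
          fun C hC D hD => card_le_or_card_le_of_not_exists_complete (fun A h => h.ne rfl) hKtt
            (hsub hC) (hsub hD)
    _ = 4 * k ^ 2 * #S := by ring
end

section
/- Let 𝒫 be a partition of a linear order (X, ≺) whose mixed graph is K_t-free and K_{t,t}-subgraph-free. Then the mixed graph of 𝒫 is (4t² − 1)-degenerate. -/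
/-- `A` is an interval of the order `lt` restricted to the ground set `S`:
no element of `S` lies strictly between two elements of `A` without being in `A`. -/
def IntervalIn {α : Type*} (lt : α → α → Prop) (A S : Set α) : Prop :=
  ∀ a ∈ A, ∀ b ∈ A, ∀ c ∈ S, lt a c → lt c b → c ∈ A

/-- `A` and `B` are mixed w.r.t. the order `lt`: within `A ∪ B`, neither `A` nor `B`
is an interval of `lt` restricted to `A ∪ B`. -/
def Mixed {α : Type*} (lt : α → α → Prop) (A B : Set α) : Prop :=
  ¬ IntervalIn lt A (A ∪ B) ∧ ¬ IntervalIn lt B (A ∪ B)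

section HeightAux

variable {β : Type*}

/-- Height of `x` in the relation `R` inside `S`: 1 + max height of strict `R`-successors. -/
noncomputable def ht (S : Finset β) (R : β → β → Prop) [DecidableRel R]
    (htr : ∀ a b c : β, R a b → R b c → R a c) (hirr : ∀ a : β, ¬ R a a) (x : β) : ℕ :=
  1 + (S.filter fun y => R x y).attach.sup fun y => ht S R htr hirr y.1
termination_by (S.filter fun y => R x y).card
decreasing_by
  have hy := Finset.mem_filter.1 y.2
  apply Finset.card_lt_card
  rw [Finset.ssubset_def]
  constructor
  · intro z hz
    rw [Finset.mem_filter] at hz ⊢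
    exact ⟨hz.1, htr _ _ _ hy.2 hz.2⟩
  · intro hsub
    have := hsub (Finset.mem_filter.2 ⟨hy.1, hy.2⟩)
    exact hirr _ (Finset.mem_filter.1 this).2

lemma ht_pos (S : Finset β) (R : β → β → Prop) [DecidableRel R]
    (htr : ∀ a b c : β, R a b → R b c → R a c) (hirr : ∀ a : β, ¬ R a a) (x : β) :
    1 ≤ ht S R htr hirr x := by
  rw [ht]; omega

lemma ht_lt_of_rel (S : Finset β) (R : β → β → Prop) [DecidableRel R]
    (htr : ∀ a b c : β, R a b → R b c → R a c) (hirr : ∀ a : β, ¬ R a a) {x y : β}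
    (hy : y ∈ S) (hxy : R x y) :
    ht S R htr hirr y < ht S R htr hirr x := by
  conv_rhs => rw [ht]
  have hmem : y ∈ S.filter fun z => R x z := Finset.mem_filter.2 ⟨hy, hxy⟩
  have h2 := Finset.le_sup (f := fun z : {z // z ∈ S.filter fun z => R x z} =>
    ht S R htr hirr z.1) (Finset.mem_attach _ ⟨y, hmem⟩)
  dsimp only at h2
  omega

lemma ht_step (S : Finset β) (R : β → β → Prop) [DecidableRel R]
    (htr : ∀ a b c : β, R a b → R b c → R a c) (hirr : ∀ a : β, ¬ R a a) {x : β} {m : ℕ}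
    (hm : 1 ≤ m) (hx : m + 1 ≤ ht S R htr hirr x) :
    ∃ y ∈ S, R x y ∧ m ≤ ht S R htr hirr y := by
  rw [ht] at hx
  have hsup : m ≤ (S.filter fun y => R x y).attach.sup fun y => ht S R htr hirr y.1 := by omega
  have hne : ((S.filter fun y => R x y).attach).Nonempty := by
    by_contra h
    rw [Finset.not_nonempty_iff_eq_empty] at h
    rw [h] at hsup
    simp at hsup
    omega
  obtain ⟨y, _, hyeq⟩ := Finset.exists_mem_eq_sup _ hne
    (fun z : {z // z ∈ S.filter fun z => R x z} => ht S R htr hirr z.1)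
  have hy := Finset.mem_filter.1 y.2
  exact ⟨y.1, hy.1, hy.2, by omega⟩

lemma ht_chain (S : Finset β) (R : β → β → Prop) [DecidableRel R]
    (htr : ∀ a b c : β, R a b → R b c → R a c) (hirr : ∀ a : β, ¬ R a a) :
    ∀ (k : ℕ) (x : β), k + 1 ≤ ht S R htr hirr x →
      ∃ f : ℕ → β, f 0 = x ∧ (∀ i, 1 ≤ i → i ≤ k → f i ∈ S) ∧
        (∀ i j, i < j → j ≤ k → R (f i) (f j)) := by
  intro k
  induction k with
  | zero =>
    intro x _
    exact ⟨fun _ => x, rfl, fun i h1 h2 => by omega, fun i j h1 h2 => by omega⟩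
  | succ k ih =>
    intro x hx
    obtain ⟨y, hyS, hxy, hy⟩ := ht_step S R htr hirr (m := k + 1) (by omega)
      (by omega : (k+1)+1 ≤ ht S R htr hirr x)
    obtain ⟨f, hf0, hfS, hfR⟩ := ih y hy
    refine ⟨fun n => if n = 0 then x else f (n - 1), by simp, ?_, ?_⟩
    · intro i h1 h2
      have : ¬ (i = 0) := by omega
      simp only [this, if_false]
      rcases Nat.eq_or_lt_of_le h1 with h | h
      · have : i - 1 = 0 := by omega
        rw [this, hf0]; exact hyS
      · exact hfS (i - 1) (by omega) (by omega)
    · intro i j hij hjk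
      have hj0 : ¬ (j = 0) := by omega
      simp only [hj0, if_false]
      rcases Nat.eq_zero_or_pos i with h | h
      · subst h
        simp only [if_true]
        rcases Nat.eq_or_lt_of_le (show 1 ≤ j by omega) with h | h
        · have : j - 1 = 0 := by omega
          rw [this, hf0]; exact hxy
        · have h01 : R (f 0) (f (j-1)) := hfR 0 (j-1) (by omega) (by omega)
          rw [hf0] at h01
          exact htr _ _ _ hxy h01
      · have : ¬ (i = 0) := by omega
        simp only [this, if_false]
        exact hfR (i-1) (j-1) (by omega) (by omega)

lemma ht_card_le (S : Finset β) (R : β → β → Prop) [DecidableRel R]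
    (htr : ∀ a b c : β, R a b → R b c → R a c) (hirr : ∀ a : β, ¬ R a a) (a m : ℕ)
    (hA : ∀ T ⊆ S, (∀ x ∈ T, ∀ y ∈ T, x ≠ y → ¬ R x y) → T.card ≤ a) :
    (S.filter fun x => ht S R htr hirr x ≤ m).card ≤ m * a := by
  classical
  have hsub : (S.filter fun x => ht S R htr hirr x ≤ m) ⊆
      (Finset.Icc 1 m).biUnion fun i => S.filter fun x => ht S R htr hirr x = i := by
    intro x hx
    rw [Finset.mem_filter] at hx
    rw [Finset.mem_biUnion]
    exact ⟨ht S R htr hirr x, Finset.mem_Icc.2 ⟨ht_pos S R htr hirr x, hx.2⟩,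
      Finset.mem_filter.2 ⟨hx.1, rfl⟩⟩
  calc (S.filter fun x => ht S R htr hirr x ≤ m).card
      ≤ ((Finset.Icc 1 m).biUnion fun i => S.filter fun x => ht S R htr hirr x = i).card :=
        Finset.card_le_card hsub
    _ ≤ ∑ i ∈ Finset.Icc 1 m, (S.filter fun x => ht S R htr hirr x = i).card :=
        Finset.card_biUnion_le
    _ ≤ (Finset.Icc 1 m).card • a := by
        apply Finset.sum_le_card_nsmul
        intro i _
        apply hA _ (Finset.filter_subset _ _)
        intro x hx y hy hxy hRxy
        rw [Finset.mem_filter] at hx hy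
        have := ht_lt_of_rel S R htr hirr hy.1 hRxy
        omega
    _ = m * a := by
        rw [Nat.card_Icc, smul_eq_mul, Nat.add_sub_cancel]

end HeightAux

section OrdAux

variable {α : Type*} [LinearOrder α]

/-- The witness-hull of `A` properly overlaps that of `B` on the left. -/
def ovp (l r : Set α → α) (A B : Set α) : Prop :=
  l A < l B ∧ l B < r A ∧ r A < r B

/-- The witness-hull of `A` is strictly inside that of `B`. -/
def inside (l r : Set α → α) (A B : Set α) : Prop :=
  l B < l A ∧ r A < r B

instance ovpDec (l r : Set α → α) (A B : Set α) : Decidable (ovp l r A B) :=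
  inferInstanceAs (Decidable (l A < l B ∧ l B < r A ∧ r A < r B))

instance insideDec (l r : Set α → α) : DecidableRel (inside l r) := fun A B =>
  inferInstanceAs (Decidable (l B < l A ∧ r A < r B))

lemma inside_trans (l r : Set α → α) :
    ∀ a b c : Set α, inside l r a b → inside l r b c → inside l r a c :=
  fun _ _ _ h1 h2 => ⟨lt_trans h2.1 h1.1, lt_trans h1.2 h2.2⟩

lemma inside_irrefl (l r : Set α → α) : ∀ a : Set α, ¬ inside l r a a :=
  fun _ h => lt_irrefl _ h.1

/-- Right-overlap partners of `A` inside `Q`. -/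
def RPs (Q : Finset (Set α)) (l r : Set α → α) (A : Set α) : Finset (Set α) :=
  Q.filter fun B => ovp l r A B

/-- Left-overlap partners of `B` inside `Q`. -/
def LPs (Q : Finset (Set α)) (l r : Set α → α) (B : Set α) : Finset (Set α) :=
  Q.filter fun A => ovp l r A B

/-- Nesting height of `B` among right-overlap partners of `A`. -/
noncomputable def HTR (Q : Finset (Set α)) (l r : Set α → α) (A B : Set α) : ℕ :=
  ht (RPs Q l r A) (inside l r) (inside_trans l r) (inside_irrefl l r) B

/-- Nesting height of `A` among left-overlap partners of `B`. -/
noncomputable def HTL (Q : Finset (Set α)) (l r : Set α → α) (B A : Set α) : ℕ :=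
  ht (LPs Q l r B) (inside l r) (inside_trans l r) (inside_irrefl l r) A

end OrdAux

section CountAux

variable {γ : Type*}

lemma sum_card_filter_fst (Q : Finset γ) (p : γ → γ → Prop) [∀ a b, Decidable (p a b)] :
    ∑ a ∈ Q, (Q.filter fun b => p a b).card = ((Q ×ˢ Q).filter fun z => p z.1 z.2).card := by
  rw [Finset.card_filter, Finset.sum_product]
  simp only [Finset.card_filter]

lemma sum_card_filter_snd (Q : Finset γ) (p : γ → γ → Prop) [∀ a b, Decidable (p a b)] :
    ∑ b ∈ Q, (Q.filter fun a => p a b).card = ((Q ×ˢ Q).filter fun z => p z.1 z.2).card := by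
  rw [Finset.card_filter, Finset.sum_product_right]
  simp only [Finset.card_filter]

end CountAux

/-- If the mixed graph of a partition `P` of a linear order is `K_t`-free and
`K_{t,t}`-subgraph-free, then it is `(4t²-1)`-degenerate: every finite nonempty set `Q`
of parts contains a part mixed with at most `4t²-1` other parts of `Q`. -/
theorem mixed_graph_degenerate {α : Type*} [LinearOrder α] (t : ℕ) (P : Set (Set α))
    (hne : ∀ A ∈ P, A.Nonempty) (hpart : ∀ x : α, ∃! A, A ∈ P ∧ x ∈ A)
    (hKt : ¬ ∃ s : Finset (Set α), ↑s ⊆ P ∧ s.card = t ∧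
      ∀ A ∈ s, ∀ B ∈ s, A ≠ B → Mixed (· < ·) A B)
    (hKtt : ¬ ∃ s₁ s₂ : Finset (Set α), ↑s₁ ⊆ P ∧ ↑s₂ ⊆ P ∧
      s₁.card = t ∧ s₂.card = t ∧ Disjoint s₁ s₂ ∧ ∀ A ∈ s₁, ∀ B ∈ s₂, Mixed (· < ·) A B) :
    ∀ Q : Finset (Set α), ↑Q ⊆ P → Q.Nonempty →
      ∃ A ∈ Q, ({B | B ∈ Q ∧ B ≠ A ∧ Mixed (· < ·) A B}).ncard ≤ 4 * t ^ 2 - 1 := by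
  classical
  intro Q hQP hQne
  obtain ⟨A₀, hA₀Q⟩ := hQne
  -- small t cases
  rcases Nat.lt_or_ge t 2 with ht2 | ht2
  · rcases (show t = 0 ∨ t = 1 by omega) with rfl | rfl
    · exact absurd ⟨∅, by simp, by simp, by simp⟩ hKt
    · refine absurd ⟨{A₀}, ?_, by simp, ?_⟩ hKt
      · simp only [Finset.coe_singleton, Set.singleton_subset_iff]
        exact hQP hA₀Q
      · intro a ha b hb hab
        rw [Finset.mem_singleton] at ha hb
        exact absurd (ha.trans hb.symm) hab
  -- main case
  obtain ⟨x₀, _⟩ := hne A₀ (hQP hA₀Q)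
  -- disjointness of parts
  have hdisj : ∀ A ∈ P, ∀ B ∈ P, A ≠ B → ∀ x : α, x ∈ A → x ∈ B → False := by
    intro A hA B hB hAB x hxA hxB
    obtain ⟨C, -, hC⟩ := hpart x
    exact hAB ((hC A ⟨hA, hxA⟩).trans (hC B ⟨hB, hxB⟩).symm)
  have hdisjQ : ∀ A ∈ Q, ∀ B ∈ Q, A ≠ B → ∀ x : α, x ∈ A → x ∈ B → False := fun A hA B hB =>
    hdisj A (hQP hA) B (hQP hB)
  -- witnesses for mixed pairs
  have hwit : ∀ A B : Set α, Mixed (· < ·) A B →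
      ∃ a₁ a₂ c : α, a₁ ∈ A ∧ a₂ ∈ A ∧ c ∈ B ∧ a₁ < c ∧ c < a₂ := by
    intro A B hM
    have h1 := hM.1
    unfold IntervalIn at h1
    push_neg at h1
    obtain ⟨a, ha, b, hb, c, hc, h1, h2, hcA⟩ := h1
    exact ⟨a, b, c, ha, hb, hc.resolve_left hcA, h1, h2⟩
  have hwit' : ∀ A B : Set α, ∃ q : α × α × α, Mixed (· < ·) A B →
      q.1 ∈ A ∧ q.2.1 ∈ A ∧ q.2.2 ∈ B ∧ q.1 < q.2.2 ∧ q.2.2 < q.2.1 := by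
    intro A B
    by_cases h : Mixed (· < ·) A B
    · obtain ⟨a₁, a₂, c, h₁, h₂, h₃, h₄, h₅⟩ := hwit A B h
      exact ⟨(a₁, a₂, c), fun _ => ⟨h₁, h₂, h₃, h₄, h₅⟩⟩
    · exact ⟨(x₀, x₀, x₀), fun hM => absurd hM h⟩
  choose w hw using hwit'
  have hpt' : ∀ A : Set α, ∃ x : α, A.Nonempty → x ∈ A := by
    intro A
    by_cases h : A.Nonempty
    · exact ⟨h.choose, fun _ => h.choose_spec⟩
    · exact ⟨x₀, fun hA => absurd hA h⟩
  choose pt hpt using hpt'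
  -- endpoint functions of the witness hulls
  obtain ⟨l, r, hlmem, hrmem, hP2⟩ :
      ∃ l r : Set α → α,
        (∀ A ∈ Q, l A ∈ A) ∧ (∀ A ∈ Q, r A ∈ A) ∧
        (∀ A ∈ Q, ∀ B ∈ Q, Mixed (· < ·) A B →
          ∃ c, c ∈ B ∧ l A < c ∧ c < r A ∧ l B ≤ c ∧ c ≤ r B) := by
    set WF : Set α → Finset α := fun A =>
      insert (pt A) ((Q.biUnion fun Y => if Mixed (· < ·) A Y then {(w A Y).1, (w A Y).2.1} else ∅)
        ∪ (Q.biUnion fun Y => if Mixed (· < ·) Y A then {(w Y A).2.2} else ∅)) with hWF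
    have hWFne : ∀ A, (WF A).Nonempty := fun A => ⟨pt A, Finset.mem_insert_self _ _⟩
    have hWFsub : ∀ A ∈ Q, ∀ x ∈ WF A, x ∈ A := by
      intro A hA x hx
      rw [hWF] at hx
      simp only [Finset.mem_insert, Finset.mem_union, Finset.mem_biUnion] at hx
      rcases hx with hx | ⟨Y, hY, hxin⟩ | ⟨Y, hY, hxin⟩
      · rw [hx]; exact hpt A (hne A (hQP hA))
      · split_ifs at hxin with hM
        · rw [Finset.mem_insert, Finset.mem_singleton] at hxin
          rcases hxin with h | h
          · rw [h]; exact (hw A Y hM).1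
          · rw [h]; exact (hw A Y hM).2.1
        · exact absurd hxin (Finset.notMem_empty _)
      · split_ifs at hxin with hM
        · rw [Finset.mem_singleton] at hxin
          rw [hxin]; exact (hw Y A hM).2.2.1
        · exact absurd hxin (Finset.notMem_empty _)
    refine ⟨fun A => (WF A).min' (hWFne A), fun A => (WF A).max' (hWFne A),
      fun A hA => hWFsub A hA _ (Finset.min'_mem _ _),
      fun A hA => hWFsub A hA _ (Finset.max'_mem _ _), ?_⟩
    intro A hA B hB hM
    have h1 : (w A B).1 ∈ WF A := by
      rw [hWF]
      apply Finset.mem_insert_of_mem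
      apply Finset.mem_union_left
      rw [Finset.mem_biUnion]
      exact ⟨B, hB, by rw [if_pos hM]; simp⟩
    have h2 : (w A B).2.1 ∈ WF A := by
      rw [hWF]
      apply Finset.mem_insert_of_mem
      apply Finset.mem_union_left
      rw [Finset.mem_biUnion]
      exact ⟨B, hB, by rw [if_pos hM]; simp⟩
    have h3 : (w A B).2.2 ∈ WF B := by
      rw [hWF]
      apply Finset.mem_insert_of_mem
      apply Finset.mem_union_right
      rw [Finset.mem_biUnion]
      exact ⟨A, hA, by rw [if_pos hM]; simp⟩
    obtain ⟨-, -, hcB, hlt1, hlt2⟩ := hw A B hM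
    exact ⟨(w A B).2.2, hcB,
      lt_of_le_of_lt (Finset.min'_le _ _ h1) hlt1,
      lt_of_lt_of_le hlt2 (Finset.le_max' _ _ h2),
      Finset.min'_le _ _ h3, Finset.le_max' _ _ h3⟩
  -- symmetry of Mixed
  have hMsymm : ∀ A B : Set α, Mixed (· < ·) A B → Mixed (· < ·) B A := by
    intro A B h
    refine ⟨?_, ?_⟩
    · rw [Set.union_comm]; exact h.2
    · rw [Set.union_comm]; exact h.1
  -- distinct endpoints
  have hlne : ∀ A ∈ Q, ∀ B ∈ Q, A ≠ B → l A ≠ l B := by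
    intro A hA B hB hAB heq
    exact hdisjQ A hA B hB hAB (l A) (hlmem A hA) (by rw [heq]; exact hlmem B hB)
  have hrne : ∀ A ∈ Q, ∀ B ∈ Q, A ≠ B → r A ≠ r B := by
    intro A hA B hB hAB heq
    exact hdisjQ A hA B hB hAB (r A) (hrmem A hA) (by rw [heq]; exact hrmem B hB)
  -- proper overlap implies mixed
  have hOvMx : ∀ A ∈ Q, ∀ B ∈ Q, ovp l r A B → Mixed (· < ·) A B := by
    intro A hA B hB hov
    obtain ⟨h1, h2, h3⟩ := hov
    have hAB : A ≠ B := by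
      intro h
      rw [h] at h1
      exact lt_irrefl _ h1
    constructor
    · intro hInt
      have := hInt (l A) (hlmem A hA) (r A) (hrmem A hA) (l B)
        (Set.mem_union_right _ (hlmem B hB)) h1 h2
      exact hdisjQ A hA B hB hAB (l B) this (hlmem B hB)
    · intro hInt
      have := hInt (l B) (hlmem B hB) (r B) (hrmem B hB) (r A)
        (Set.mem_union_left _ (hrmem A hA)) h2 h3
      exact hdisjQ A hA B hB hAB (r A) (hrmem A hA) this
  -- trichotomy for mixed pairs
  have hTri : ∀ A ∈ Q, ∀ B ∈ Q, A ≠ B → Mixed (· < ·) A B →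
      ovp l r A B ∨ ovp l r B A ∨ (l A < l B ∧ r B < r A) ∨ (l B < l A ∧ r A < r B) := by
    intro A hA B hB hAB hM
    obtain ⟨c, hcB, hc1, hc2, hc3, hc4⟩ := hP2 A hA B hB hM
    obtain ⟨d, hdA, hd1, hd2, hd3, hd4⟩ := hP2 B hB A hA (hMsymm _ _ hM)
    rcases lt_or_gt_of_ne (hlne A hA B hB hAB) with hl | hl
    · rcases lt_or_gt_of_ne (hrne A hA B hB hAB) with hr | hr
      · exact Or.inl ⟨hl, lt_of_le_of_lt hc3 hc2, hr⟩
      · exact Or.inr (Or.inr (Or.inl ⟨hl, hr⟩))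
    · rcases lt_or_gt_of_ne (hrne A hA B hB hAB) with hr | hr
      · exact Or.inr (Or.inr (Or.inr ⟨hl, hr⟩))
      · exact Or.inr (Or.inl ⟨hl, lt_of_le_of_lt hd3 hd2, hr⟩)
  -- clique bound from K_t-freeness
  have hclique : ∀ T : Finset (Set α), ↑T ⊆ ↑Q →
      (∀ x ∈ T, ∀ y ∈ T, x ≠ y → Mixed (· < ·) x y) → T.card ≤ t - 1 := by
    intro T hTQ hTmx
    by_contra hcard
    push_neg at hcard
    have htle : t ≤ T.card := by omega
    obtain ⟨s, hsT, hscard⟩ := Finset.exists_subset_card_eq htle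
    refine hKt ⟨s, ?_, hscard, fun x hx y hy hxy => hTmx x (hsT hx) y (hsT hy) hxy⟩
    intro X hX
    exact hQP (hTQ (Finset.coe_subset.2 hsT hX))
  -- outer containment partners are pairwise mixed
  have hOUT : ∀ A ∈ Q,
      (Q.filter fun B => Mixed (· < ·) B A ∧ l B < l A ∧ r A < r B).card ≤ t - 1 := by
    intro A hA
    apply hclique
    · intro X hX
      exact Finset.mem_coe.2 (Finset.mem_filter.1 (Finset.mem_coe.1 hX)).1
    · intro x hx y hy hxy
      rw [Finset.mem_filter] at hx hy
      obtain ⟨hxQ, hxM, hxl, hxr⟩ := hx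
      obtain ⟨hyQ, hyM, hyl, hyr⟩ := hy
      obtain ⟨c, hcy, hc1, hc2, -, -⟩ := hP2 A hA y hyQ (hMsymm _ _ hyM)
      obtain ⟨d, hdx, hd1, hd2, -, -⟩ := hP2 A hA x hxQ (hMsymm _ _ hxM)
      constructor
      · intro hInt
        have := hInt (l x) (hlmem x hxQ) (r x) (hrmem x hxQ) c
          (Set.mem_union_right _ hcy) (lt_trans hxl hc1) (lt_trans hc2 hxr)
        exact hdisjQ x hxQ y hyQ hxy c this hcy
      · intro hInt
        have := hInt (l y) (hlmem y hyQ) (r y) (hrmem y hyQ) d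
          (Set.mem_union_left _ hdx) (lt_trans hyl hd1) (lt_trans hd2 hyr)
        exact hdisjQ y hyQ x hxQ hxy.symm d this hdx
  -- incomparable right-partners are mixed
  have hRPmx : ∀ A ∈ Q, ∀ x ∈ RPs Q l r A, ∀ y ∈ RPs Q l r A, x ≠ y →
      ¬ inside l r x y → ¬ inside l r y x → Mixed (· < ·) x y := by
    intro A hA x hx y hy hxy h1 h2
    rw [RPs, Finset.mem_filter] at hx hy
    obtain ⟨hxQ, hxov⟩ := hx
    obtain ⟨hyQ, hyov⟩ := hy
    rcases lt_or_gt_of_ne (hlne x hxQ y hyQ hxy) with hl | hl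
    · have hr : r x < r y := by
        rcases lt_or_gt_of_ne (hrne x hxQ y hyQ hxy) with h | h
        · exact h
        · exact absurd ⟨hl, h⟩ h2
      exact hOvMx x hxQ y hyQ ⟨hl, lt_trans hyov.2.1 hxov.2.2, hr⟩
    · have hr : r y < r x := by
        rcases lt_or_gt_of_ne (hrne x hxQ y hyQ hxy) with h | h
        · exact absurd ⟨hl, h⟩ h1
        · exact h
      exact hMsymm _ _ (hOvMx y hyQ x hxQ ⟨hl, lt_trans hxov.2.1 hyov.2.2, hr⟩)
  -- incomparable left-partners are mixed
  have hLPmx : ∀ B ∈ Q, ∀ x ∈ LPs Q l r B, ∀ y ∈ LPs Q l r B, x ≠ y →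
      ¬ inside l r x y → ¬ inside l r y x → Mixed (· < ·) x y := by
    intro B hB x hx y hy hxy h1 h2
    rw [LPs, Finset.mem_filter] at hx hy
    obtain ⟨hxQ, hxov⟩ := hx
    obtain ⟨hyQ, hyov⟩ := hy
    rcases lt_or_gt_of_ne (hlne x hxQ y hyQ hxy) with hl | hl
    · have hr : r x < r y := by
        rcases lt_or_gt_of_ne (hrne x hxQ y hyQ hxy) with h | h
        · exact h
        · exact absurd ⟨hl, h⟩ h2
      exact hOvMx x hxQ y hyQ ⟨hl, lt_trans hyov.1 hxov.2.1, hr⟩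
    · have hr : r y < r x := by
        rcases lt_or_gt_of_ne (hrne x hxQ y hyQ hxy) with h | h
        · exact absurd ⟨hl, h⟩ h1
        · exact h
      exact hMsymm _ _ (hOvMx y hyQ x hxQ ⟨hl, lt_trans hxov.1 hyov.2.1, hr⟩)
  -- low-height bounds
  have hLowR : ∀ A ∈ Q, ((RPs Q l r A).filter fun B => HTR Q l r A B ≤ t).card ≤ t * (t-1) := by
    intro A hA
    simp only [HTR]
    apply ht_card_le
    intro T hT hanti
    apply hclique T
    · intro X hX
      have := hT (Finset.mem_coe.1 hX)
      rw [RPs, Finset.mem_filter] at this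
      exact Finset.mem_coe.2 this.1
    · intro x hx y hy hxy
      exact hRPmx A hA x (hT hx) y (hT hy) hxy (hanti x hx y hy hxy) (hanti y hy x hx hxy.symm)
  have hLowL : ∀ B ∈ Q, ((LPs Q l r B).filter fun A => HTL Q l r B A ≤ t).card ≤ t * (t-1) := by
    intro B hB
    simp only [HTL]
    apply ht_card_le
    intro T hT hanti
    apply hclique T
    · intro X hX
      have := hT (Finset.mem_coe.1 hX)
      rw [LPs, Finset.mem_filter] at this
      exact Finset.mem_coe.2 this.1
    · intro x hx y hy hxy
      exact hLPmx B hB x (hT hx) y (hT hy) hxy (hanti x hx y hy hxy) (hanti y hy x hx hxy.symm)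
  -- an overlap pair cannot have large height on both sides (else K_{t,t})
  have hHigh : ∀ A ∈ Q, ∀ B ∈ Q, ovp l r A B → t < HTR Q l r A B → HTL Q l r B A ≤ t := by
    intro A hA B hB hov hhR
    by_contra hc
    push_neg at hc
    rw [HTR] at hhR
    rw [HTL] at hc
    obtain ⟨f, hf0, hfS, hfR⟩ := ht_chain (RPs Q l r A) (inside l r) (inside_trans l r)
      (inside_irrefl l r) t B (by omega)
    obtain ⟨g, hg0, hgS, hgR⟩ := ht_chain (LPs Q l r B) (inside l r) (inside_trans l r)
      (inside_irrefl l r) t A (by omega)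
    have hfmem : ∀ i, 1 ≤ i → i ≤ t → f i ∈ Q ∧ ovp l r A (f i) := by
      intro i h1 h2
      have := hfS i h1 h2
      rw [RPs, Finset.mem_filter] at this
      exact this
    have hgmem : ∀ i, 1 ≤ i → i ≤ t → g i ∈ Q ∧ ovp l r (g i) B := by
      intro i h1 h2
      have := hgS i h1 h2
      rw [LPs, Finset.mem_filter] at this
      exact this
    have hpair : ∀ i, 1 ≤ i → i ≤ t → ∀ j, 1 ≤ j → j ≤ t → ovp l r (g j) (f i) := by
      intro i hi1 hi2 j hj1 hj2
      have hgin : inside l r A (g j) := by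
        have := hgR 0 j (by omega) hj2
        rwa [hg0] at this
      have hfin : inside l r B (f i) := by
        have := hfR 0 i (by omega) hi2
        rwa [hf0] at this
      exact ⟨lt_trans hgin.1 (hfmem i hi1 hi2).2.1,
        lt_trans hfin.1 (hgmem j hj1 hj2).2.2.1,
        lt_trans (hgmem j hj1 hj2).2.2.2 hfin.2⟩
    have hginj : Set.InjOn (fun i => g (i+1)) ↑(Finset.range t) := by
      intro i hi j hj heq
      simp only [Finset.coe_range, Set.mem_Iio] at hi hj
      have heq' : g (i+1) = g (j+1) := heq
      by_contra hne'
      rcases Nat.lt_or_ge i j with h | h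
      · have := hgR (i+1) (j+1) (by omega) (by omega)
        rw [heq'] at this
        exact inside_irrefl l r _ this
      · have := hgR (j+1) (i+1) (by omega) (by omega)
        rw [heq'] at this
        exact inside_irrefl l r _ this
    have hfinj : Set.InjOn (fun i => f (i+1)) ↑(Finset.range t) := by
      intro i hi j hj heq
      simp only [Finset.coe_range, Set.mem_Iio] at hi hj
      have heq' : f (i+1) = f (j+1) := heq
      by_contra hne'
      rcases Nat.lt_or_ge i j with h | h
      · have := hfR (i+1) (j+1) (by omega) (by omega)
        rw [heq'] at this
        exact inside_irrefl l r _ this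
      · have := hfR (j+1) (i+1) (by omega) (by omega)
        rw [heq'] at this
        exact inside_irrefl l r _ this
    apply hKtt
    refine ⟨(Finset.range t).image (fun i => g (i+1)), (Finset.range t).image (fun i => f (i+1)),
      ?_, ?_, ?_, ?_, ?_, ?_⟩
    · intro X hX
      simp only [Finset.coe_image, Set.mem_image, Finset.mem_coe, Finset.mem_range] at hX
      obtain ⟨i, hi, rfl⟩ := hX
      exact hQP ((hgmem (i+1) (by omega) (by omega)).1)
    · intro X hX
      simp only [Finset.coe_image, Set.mem_image, Finset.mem_coe, Finset.mem_range] at hX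
      obtain ⟨i, hi, rfl⟩ := hX
      exact hQP ((hfmem (i+1) (by omega) (by omega)).1)
    · rw [Finset.card_image_of_injOn hginj, Finset.card_range]
    · rw [Finset.card_image_of_injOn hfinj, Finset.card_range]
    · rw [Finset.disjoint_left]
      intro X hX1 hX2
      simp only [Finset.mem_image, Finset.mem_range] at hX1 hX2
      obtain ⟨j, hj, hXg⟩ := hX1
      obtain ⟨i, hi, hXf⟩ := hX2
      have := hpair (i+1) (by omega) (by omega) (j+1) (by omega) (by omega)
      rw [hXg, hXf] at this
      exact lt_irrefl _ this.1
    · intro X hX Y hY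
      simp only [Finset.mem_image, Finset.mem_range] at hX hY
      obtain ⟨j, hj, rfl⟩ := hX
      obtain ⟨i, hi, rfl⟩ := hY
      exact hOvMx _ ((hgmem (j+1) (by omega) (by omega)).1) _
        ((hfmem (i+1) (by omega) (by omega)).1)
        (hpair (i+1) (by omega) (by omega) (j+1) (by omega) (by omega))
  -- Now the counting.
  -- every mixed partner of `A` falls into one of four classes
  have hdegsub : ∀ A ∈ Q, (Q.filter fun B => B ≠ A ∧ Mixed (· < ·) A B) ⊆
      (((RPs Q l r A ∪ LPs Q l r A) ∪
        Q.filter fun B => Mixed (· < ·) A B ∧ l A < l B ∧ r B < r A) ∪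
        Q.filter fun B => Mixed (· < ·) B A ∧ l B < l A ∧ r A < r B) := by
    intro A hA B hB
    rw [Finset.mem_filter] at hB
    obtain ⟨hBQ, hBA, hM⟩ := hB
    rcases hTri A hA B hBQ (Ne.symm hBA) hM with h | h | h | h
    · refine Finset.mem_union_left _ (Finset.mem_union_left _ (Finset.mem_union_left _ ?_))
      rw [RPs, Finset.mem_filter]; exact ⟨hBQ, h⟩
    · refine Finset.mem_union_left _ (Finset.mem_union_left _ (Finset.mem_union_right _ ?_))
      rw [LPs, Finset.mem_filter]; exact ⟨hBQ, h⟩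
    · refine Finset.mem_union_left _ (Finset.mem_union_right _ ?_)
      exact Finset.mem_filter.2 ⟨hBQ, hM, h.1, h.2⟩
    · refine Finset.mem_union_right _ ?_
      exact Finset.mem_filter.2 ⟨hBQ, hMsymm _ _ hM, h.1, h.2⟩
  have hdegle : ∀ A ∈ Q, (Q.filter fun B => B ≠ A ∧ Mixed (· < ·) A B).card ≤
      (RPs Q l r A).card + (LPs Q l r A).card
      + (Q.filter fun B => Mixed (· < ·) A B ∧ l A < l B ∧ r B < r A).card
      + (Q.filter fun B => Mixed (· < ·) B A ∧ l B < l A ∧ r A < r B).card := by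
    intro A hA
    have h0 := Finset.card_le_card (hdegsub A hA)
    have h1 := Finset.card_union_le (RPs Q l r A) (LPs Q l r A)
    have h2 := Finset.card_union_le (RPs Q l r A ∪ LPs Q l r A)
      (Q.filter fun B => Mixed (· < ·) A B ∧ l A < l B ∧ r B < r A)
    have h3 := Finset.card_union_le ((RPs Q l r A ∪ LPs Q l r A) ∪
      Q.filter fun B => Mixed (· < ·) A B ∧ l A < l B ∧ r B < r A)
      (Q.filter fun B => Mixed (· < ·) B A ∧ l B < l A ∧ r A < r B)
    omega
  -- sums over the four classes
  have hsum1 : ∑ A ∈ Q, (RPs Q l r A).card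
      = ((Q ×ˢ Q).filter fun z => ovp l r z.1 z.2).card :=
    sum_card_filter_fst Q (fun a b => ovp l r a b)
  have hsum2 : ∑ A ∈ Q, (LPs Q l r A).card
      = ((Q ×ˢ Q).filter fun z => ovp l r z.1 z.2).card :=
    sum_card_filter_snd Q (fun a b => ovp l r a b)
  have hsum3 : ∑ A ∈ Q, (Q.filter fun B => Mixed (· < ·) A B ∧ l A < l B ∧ r B < r A).card
      = ((Q ×ˢ Q).filter fun z => Mixed (· < ·) z.1 z.2 ∧ l z.1 < l z.2 ∧ r z.2 < r z.1).card :=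
    sum_card_filter_fst Q (fun a b => Mixed (· < ·) a b ∧ l a < l b ∧ r b < r a)
  have hsum4 : ∑ A ∈ Q, (Q.filter fun B => Mixed (· < ·) B A ∧ l B < l A ∧ r A < r B).card
      = ((Q ×ˢ Q).filter fun z => Mixed (· < ·) z.1 z.2 ∧ l z.1 < l z.2 ∧ r z.2 < r z.1).card :=
    sum_card_filter_snd Q (fun a b => Mixed (· < ·) a b ∧ l a < l b ∧ r b < r a)
  -- bound on containment pairs
  have hINP : ((Q ×ˢ Q).filter fun z =>
      Mixed (· < ·) z.1 z.2 ∧ l z.1 < l z.2 ∧ r z.2 < r z.1).card ≤ Q.card * (t-1) := by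
    rw [← hsum4]
    have := Finset.sum_le_card_nsmul Q
      (fun A => (Q.filter fun B => Mixed (· < ·) B A ∧ l B < l A ∧ r A < r B).card)
      (t-1) (fun A hA => hOUT A hA)
    rwa [smul_eq_mul] at this
  -- bound on overlap pairs
  have hOVP : ((Q ×ˢ Q).filter fun z => ovp l r z.1 z.2).card
      ≤ Q.card * (t*(t-1)) + Q.card * (t*(t-1)) := by
    have hsplit : ((Q ×ˢ Q).filter fun z => ovp l r z.1 z.2) ⊆
        ((Q ×ˢ Q).filter fun z => ovp l r z.1 z.2 ∧ HTR Q l r z.1 z.2 ≤ t) ∪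
        ((Q ×ˢ Q).filter fun z => ovp l r z.1 z.2 ∧ HTL Q l r z.2 z.1 ≤ t) := by
      intro z hz
      rw [Finset.mem_filter] at hz
      rcases le_or_gt (HTR Q l r z.1 z.2) t with h | h
      · exact Finset.mem_union_left _ (Finset.mem_filter.2 ⟨hz.1, hz.2, h⟩)
      · have hzQ := Finset.mem_product.1 hz.1
        exact Finset.mem_union_right _ (Finset.mem_filter.2 ⟨hz.1, hz.2,
          hHigh z.1 hzQ.1 z.2 hzQ.2 hz.2 h⟩)
    refine (Finset.card_le_card hsplit).trans ((Finset.card_union_le _ _).trans ?_)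
    have hlow1 : ((Q ×ˢ Q).filter fun z => ovp l r z.1 z.2 ∧ HTR Q l r z.1 z.2 ≤ t).card
        ≤ Q.card * (t*(t-1)) := by
      rw [← sum_card_filter_fst Q (fun a b => ovp l r a b ∧ HTR Q l r a b ≤ t)]
      have heach : ∀ a ∈ Q,
          (Q.filter fun b => ovp l r a b ∧ HTR Q l r a b ≤ t).card ≤ t*(t-1) := by
        intro a ha
        rw [← Finset.filter_filter]
        exact hLowR a ha
      have := Finset.sum_le_card_nsmul Q
        (fun a => (Q.filter fun b => ovp l r a b ∧ HTR Q l r a b ≤ t).card) (t*(t-1)) heach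
      rwa [smul_eq_mul] at this
    have hlow2 : ((Q ×ˢ Q).filter fun z => ovp l r z.1 z.2 ∧ HTL Q l r z.2 z.1 ≤ t).card
        ≤ Q.card * (t*(t-1)) := by
      rw [← sum_card_filter_snd Q (fun a b => ovp l r a b ∧ HTL Q l r b a ≤ t)]
      have heach : ∀ b ∈ Q,
          (Q.filter fun a => ovp l r a b ∧ HTL Q l r b a ≤ t).card ≤ t*(t-1) := by
        intro b hb
        rw [← Finset.filter_filter]
        exact hLowL b hb
      have := Finset.sum_le_card_nsmul Q
        (fun b => (Q.filter fun a => ovp l r a b ∧ HTL Q l r b a ≤ t).card) (t*(t-1)) heach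
      rwa [smul_eq_mul] at this
    exact add_le_add hlow1 hlow2
  -- total degree sum
  have htotal : ∑ A ∈ Q, (Q.filter fun B => B ≠ A ∧ Mixed (· < ·) A B).card ≤
      Q.card * (4*(t*(t-1)) + 2*(t-1)) := by
    have hstep : ∑ A ∈ Q, (Q.filter fun B => B ≠ A ∧ Mixed (· < ·) A B).card ≤
        ∑ A ∈ Q, ((RPs Q l r A).card + (LPs Q l r A).card
        + (Q.filter fun B => Mixed (· < ·) A B ∧ l A < l B ∧ r B < r A).card
        + (Q.filter fun B => Mixed (· < ·) B A ∧ l B < l A ∧ r A < r B).card) :=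
      Finset.sum_le_sum hdegle
    have hsplit : ∑ A ∈ Q, ((RPs Q l r A).card + (LPs Q l r A).card
        + (Q.filter fun B => Mixed (· < ·) A B ∧ l A < l B ∧ r B < r A).card
        + (Q.filter fun B => Mixed (· < ·) B A ∧ l B < l A ∧ r A < r B).card)
        = ∑ A ∈ Q, (RPs Q l r A).card + ∑ A ∈ Q, (LPs Q l r A).card
        + ∑ A ∈ Q, (Q.filter fun B => Mixed (· < ·) A B ∧ l A < l B ∧ r B < r A).card
        + ∑ A ∈ Q, (Q.filter fun B => Mixed (· < ·) B A ∧ l B < l A ∧ r A < r B).card := by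
      rw [Finset.sum_add_distrib, Finset.sum_add_distrib, Finset.sum_add_distrib]
    have hb1 : ∑ A ∈ Q, (RPs Q l r A).card
        ≤ Q.card * (t*(t-1)) + Q.card * (t*(t-1)) := by rw [hsum1]; exact hOVP
    have hb2 : ∑ A ∈ Q, (LPs Q l r A).card
        ≤ Q.card * (t*(t-1)) + Q.card * (t*(t-1)) := by rw [hsum2]; exact hOVP
    have hb3 : ∑ A ∈ Q, (Q.filter fun B => Mixed (· < ·) A B ∧ l A < l B ∧ r B < r A).card
        ≤ Q.card * (t-1) := by rw [hsum3]; exact hINP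
    have hb4 : ∑ A ∈ Q, (Q.filter fun B => Mixed (· < ·) B A ∧ l B < l A ∧ r A < r B).card
        ≤ Q.card * (t-1) := by rw [hsum4]; exact hINP
    have hring : Q.card * (4*(t*(t-1)) + 2*(t-1)) =
        (Q.card * (t*(t-1)) + Q.card * (t*(t-1)))
        + (Q.card * (t*(t-1)) + Q.card * (t*(t-1)))
        + Q.card * (t-1) + Q.card * (t-1) := by ring
    rw [hring]
    linarith [hstep, hsplit, hb1, hb2, hb3, hb4]
  -- extract a vertex of small degree
  have hex : ∃ A ∈ Q, (Q.filter fun B => B ≠ A ∧ Mixed (· < ·) A B).card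
      ≤ 4*(t*(t-1)) + 2*(t-1) := by
    apply Finset.exists_le_of_sum_le ⟨A₀, hA₀Q⟩
    calc ∑ A ∈ Q, (Q.filter fun B => B ≠ A ∧ Mixed (· < ·) A B).card
        ≤ Q.card * (4*(t*(t-1)) + 2*(t-1)) := htotal
      _ = ∑ _A ∈ Q, (4*(t*(t-1)) + 2*(t-1)) := by rw [Finset.sum_const, smul_eq_mul]
  obtain ⟨A, hAQ, hdeg⟩ := hex
  refine ⟨A, hAQ, ?_⟩
  have hseteq : {B | B ∈ Q ∧ B ≠ A ∧ Mixed (· < ·) A B} =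
      ↑(Q.filter fun B => B ≠ A ∧ Mixed (· < ·) A B) := by
    ext B
    simp only [Set.mem_setOf_eq, Finset.coe_filter, Finset.mem_coe]
  rw [hseteq, Set.ncard_coe_finset]
  have harith : 4*(t*(t-1)) + 2*(t-1) ≤ 4 * t^2 - 1 := by
    obtain ⟨v, rfl⟩ : ∃ v, t = v + 1 := ⟨t - 1, by omega⟩
    have e1 : 4*((v+1)*(v+1-1)) + 2*(v+1-1) = 4*(v*v) + 6*v := by
      simp only [Nat.add_sub_cancel]; ring
    have e2 : 4*(v+1)^2 = 4*(v*v) + 8*v + 4 := by ring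
    rw [e1, e2]
    generalize v*v = u
    omega
  exact hdeg.trans harith
end

section
/- In a well-formed delayed structured tree, indistinguishability is an equivalence relation (on the set of nodes, where only siblings can be related). -/
/-- Raw data of a delayed structured tree: a rooted tree with node set `V`
(given by a parent function and a depth function), a linear order `llt` (`<`)
on its leaves, and for each node `t` a linear order `pre t` (`≺_t`) on the
grandchildren of `t`. -/
structure PreDTree (V : Type*) where
  root : V
  parent : V → V
  depth : V → ℕ
  llt : V → V → Prop
  pre : V → V → V → Prop

namespace PreDTree

variable {V : Type*} (T : PreDTree V)

/-- `u` is an ancestor of (or equal to) `v`. -/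
def anc (u v : V) : Prop := ∃ k : ℕ, T.parent^[k] v = u

/-- `v` is a leaf: it has no proper child. -/
def isLeaf (v : V) : Prop := ∀ u, T.parent u = v → u = v

/-- `u` is a child of `t`. -/
def isChild (u t : V) : Prop := T.parent u = t ∧ u ≠ t

/-- `u` is a grandchild of `t`. -/
def isGrandchild (u t : V) : Prop :=
  T.isChild u (T.parent u) ∧ T.isChild (T.parent u) t

/-- `u` and `v` are (distinct) siblings. -/
def siblings (u v : V) : Prop :=
  u ≠ v ∧ T.isChild u (T.parent u) ∧ T.isChild v (T.parent v) ∧ T.parent u = T.parent v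

/-- The set `L(t)` of leaves below `t`. -/
def leavesBelow (t : V) : Set V := {x | T.isLeaf x ∧ T.anc t x}

/-- The realised order `≺` on the leaves: `x ≺ y` iff `x' ≺_t y'` where `t` is the
closest common ancestor of `x, y` and `x', y'` are the grandchildren of `t`
(lying below distinct children of `t`) above `x, y` respectively. -/
def realLT (x y : V) : Prop :=
  ∃ t x' y', T.isGrandchild x' t ∧ T.isGrandchild y' t ∧ T.parent x' ≠ T.parent y' ∧
    T.anc x' x ∧ T.anc y' y ∧ T.pre t x' y'

/-- Extension of `≺` to nodes: all leaves below `u` are `≺`-below all leaves below `v`. -/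
def nodeLT (u v : V) : Prop :=
  (T.leavesBelow u).Nonempty ∧ (T.leavesBelow v).Nonempty ∧
    ∀ x ∈ T.leavesBelow u, ∀ y ∈ T.leavesBelow v, T.realLT x y

/-- Extension of the leaf order `<` to nodes. -/
def nodeLLT (u v : V) : Prop :=
  (T.leavesBelow u).Nonempty ∧ (T.leavesBelow v).Nonempty ∧
    ∀ x ∈ T.leavesBelow u, ∀ y ∈ T.leavesBelow v, T.llt x y

/-- The leaf `v` distinguishes the siblings `u, w`: `u ≺ v ≺ w` or `w ≺ v ≺ u`. -/
def distinguishes (v u w : V) : Prop :=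
  (T.nodeLT u v ∧ T.nodeLT v w) ∨ (T.nodeLT w v ∧ T.nodeLT v u)

/-- `u` and `w` are indistinguishable: `u = w`, or they are siblings not distinguished
by any leaf outside the leaves below their common parent. -/
def Indist (u w : V) : Prop :=
  u = w ∨ (T.siblings u w ∧
    ∀ v, T.isLeaf v → v ∉ T.leavesBelow (T.parent u) → ¬ T.distinguishes v u w)

/-- The realisation `≺` of the tree is a (strict) linear order on the leaves. -/
def WellFormed : Prop :=
  (∀ x, ¬ T.realLT x x) ∧
  (∀ x y z, T.realLT x y → T.realLT y z → T.realLT x z) ∧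
  (∀ x y, T.isLeaf x → T.isLeaf y → x ≠ y → T.realLT x y ∨ T.realLT y x)

end PreDTree

/-- The axioms of a delayed structured tree: the parent/depth data describe a rooted
tree, `llt` is a linear order on the leaves compatible with the tree, every leaf is an
only child, and each `pre t` is a linear order on the grandchildren of `t`. -/
structure IsDelayedTree {V : Type*} (T : PreDTree V) : Prop where
  parent_root : T.parent T.root = T.root
  depth_root : T.depth T.root = 0
  depth_parent : ∀ v, v ≠ T.root → T.depth (T.parent v) + 1 = T.depth v
  llt_irrefl : ∀ x, ¬ T.llt x x
  llt_trans : ∀ x y z, T.llt x y → T.llt y z → T.llt x z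
  llt_total : ∀ x y, T.isLeaf x → T.isLeaf y → x ≠ y → T.llt x y ∨ T.llt y x
  llt_dom : ∀ x y, T.llt x y → T.isLeaf x ∧ T.isLeaf y
  llt_compatible : ∀ t, ∀ x ∈ T.leavesBelow t, ∀ z ∈ T.leavesBelow t, ∀ y,
    T.llt x y → T.llt y z → y ∈ T.leavesBelow t
  leaf_only_child : ∀ x u, T.isLeaf x → T.isChild u (T.parent x) → u = x
  pre_irrefl : ∀ t x, ¬ T.pre t x x
  pre_trans : ∀ t x y z, T.pre t x y → T.pre t y z → T.pre t x z
  pre_total : ∀ t x y, T.isGrandchild x t → T.isGrandchild y t → x ≠ y →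
    T.pre t x y ∨ T.pre t y x
  pre_dom : ∀ t x y, T.pre t x y → T.isGrandchild x t ∧ T.isGrandchild y t

namespace PreDTree

variable {V : Type*} {T : PreDTree V}

lemma anc_refl (v : V) : T.anc v v := ⟨0, rfl⟩

lemma anc_trans {a b c : V} (h1 : T.anc a b) (h2 : T.anc b c) : T.anc a c := by
  obtain ⟨k, hk⟩ := h1; obtain ⟨m, hm⟩ := h2
  exact ⟨k + m, by rw [Function.iterate_add_apply, hm, hk]⟩

lemma anc_comparable {a b x : V} (ha : T.anc a x) (hb : T.anc b x) :
    T.anc a b ∨ T.anc b a := by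
  obtain ⟨k, hk⟩ := ha; obtain ⟨m, hm⟩ := hb
  rcases le_total k m with h | h
  · right
    refine ⟨m - k, ?_⟩
    rw [← hk, ← Function.iterate_add_apply, Nat.sub_add_cancel h, hm]
  · left
    refine ⟨k - m, ?_⟩
    rw [← hm, ← Function.iterate_add_apply, Nat.sub_add_cancel h, hk]

lemma depth_parent_le (hT : IsDelayedTree T) (v : V) :
    T.depth (T.parent v) ≤ T.depth v := by
  by_cases h : v = T.root
  · subst h; rw [hT.parent_root]
  · have := hT.depth_parent v h; omega

lemma depth_anc_le (hT : IsDelayedTree T) {u v : V} (h : T.anc u v) :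
    T.depth u ≤ T.depth v := by
  obtain ⟨k, hk⟩ := h
  subst hk
  induction k with
  | zero => simp
  | succ n ih =>
    rw [Function.iterate_succ_apply']
    exact le_trans (depth_parent_le hT _) ih

lemma depth_anc_lt (hT : IsDelayedTree T) {u v : V} (h : T.anc u v) (hne : u ≠ v) :
    T.depth u < T.depth v := by
  obtain ⟨k, hk⟩ := h
  cases k with
  | zero => exact absurd hk.symm hne
  | succ n =>
    have hvroot : v ≠ T.root := by
      rintro rfl
      exact hne (hk ▸ (Function.iterate_fixed hT.parent_root (n + 1)).symm).symm
    have h1 : T.depth (T.parent v) + 1 = T.depth v := hT.depth_parent v hvroot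
    have h2 : T.depth u ≤ T.depth (T.parent v) := by
      refine depth_anc_le hT ⟨n, ?_⟩
      rw [← Function.iterate_succ_apply, hk]
    omega

lemma anc_of_depth_le (hT : IsDelayedTree T) {a b x : V} (ha : T.anc a x)
    (hb : T.anc b x) (hd : T.depth a ≤ T.depth b) : T.anc a b := by
  rcases anc_comparable ha hb with h | h
  · exact h
  · by_cases hab : b = a
    · subst hab; exact anc_refl _
    · exact absurd (depth_anc_lt hT h hab) (by omega)

lemma isChild_depth (hT : IsDelayedTree T) {u p : V} (h : T.isChild u p) :
    T.depth u = T.depth p + 1 := by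
  have hur : u ≠ T.root := by
    rintro rfl
    exact h.2 (hT.parent_root ▸ h.1.symm ▸ h.1)
  have := hT.depth_parent u hur
  rw [h.1] at this; omega

lemma anc_of_isChild {u p : V} (h : T.isChild u p) : T.anc p u :=
  ⟨1, by simpa using h.1⟩

lemma leavesBelow_nonempty [Fintype V] (hT : IsDelayedTree T) (v : V) :
    (T.leavesBelow v).Nonempty := by
  set N := Finset.univ.sup T.depth with hN
  have key : ∀ n : ℕ, ∀ v : V, N < T.depth v + n → (T.leavesBelow v).Nonempty := by
    intro n
    induction n with
    | zero =>
      intro v hv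
      exact absurd (Finset.le_sup (f := T.depth) (Finset.mem_univ v)) (by omega)
    | succ m ih =>
      intro v hv
      by_cases hl : T.isLeaf v
      · exact ⟨v, hl, anc_refl v⟩
      · simp only [isLeaf, not_forall] at hl
        obtain ⟨u, hu, hune⟩ := hl
        have hchild : T.isChild u v := ⟨hu, hune⟩
        have hdep : T.depth u = T.depth v + 1 := isChild_depth hT hchild
        obtain ⟨x, hx1, hx2⟩ := ih u (by omega)
        exact ⟨x, hx1, anc_trans (anc_of_isChild hchild) hx2⟩
  exact key (N + 1) v (by omega)

lemma eq_of_mem_leavesBelow_leaf {v x : V} (hv : T.isLeaf v)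
    (hx : x ∈ T.leavesBelow v) : x = v := by
  obtain ⟨-, k, hk⟩ := hx
  induction k generalizing x with
  | zero => exact hk
  | succ n ih =>
    rw [Function.iterate_succ_apply'] at hk
    exact ih (hv _ hk)

lemma anc_of_isGrandchild {c s : V} (h : T.isGrandchild c s) : T.anc s c :=
  ⟨2, by simpa [Function.iterate_succ_apply'] using h.2.1⟩

lemma isGrandchild_depth (hT : IsDelayedTree T) {c s : V} (h : T.isGrandchild c s) :
    T.depth c = T.depth s + 2 := by
  have h1 := isChild_depth hT h.1
  have h2 := isChild_depth hT h.2
  omega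

/-- Key transfer lemma: if `c` is a grandchild of a common ancestor `s` of `v`
(a leaf not below `t`) and `x` (a leaf below child `w` of `t`) with `c` above `x`,
then `c` is also above any other leaf `xx` below `w`. -/
lemma anc_transfer (hT : IsDelayedTree T) {t v w x xx s c : V}
    (hv : ¬ T.anc t v) (hw : T.isChild w t)
    (hx : T.anc w x) (hxx : T.anc w xx)
    (hg : T.isGrandchild c s) (hcx : T.anc c x) (hsv : T.anc s v) :
    T.anc c xx := by
  have hsx : T.anc s x := anc_trans (anc_of_isGrandchild hg) hcx
  have htx : T.anc t x := anc_trans (anc_of_isChild hw) hx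
  have hst : T.anc s t := by
    rcases anc_comparable htx hsx with h | h
    · exact absurd (anc_trans h hsv) hv
    · exact h
  have hsnet : s ≠ t := by
    rintro rfl; exact hv hsv
  have hds : T.depth s < T.depth t := depth_anc_lt hT hst hsnet
  have hdc : T.depth c = T.depth s + 2 := isGrandchild_depth hT hg
  have hdw : T.depth w = T.depth t + 1 := isChild_depth hT hw
  have hcw : T.anc c w := anc_of_depth_le hT hcx hx (by omega)
  exact anc_trans hcw hxx

lemma realLT_transfer_right (hT : IsDelayedTree T) {t v w x xx : V}
    (hv : ¬ T.anc t v) (hw : T.isChild w t)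
    (hx : T.anc w x) (hxx : T.anc w xx)
    (h : T.realLT v x) : T.realLT v xx := by
  obtain ⟨s, v', c, hgv, hgc, hne, hav, hac, hp⟩ := h
  exact ⟨s, v', c, hgv, hgc, hne, hav,
    anc_transfer hT hv hw hx hxx hgc hac (anc_trans (anc_of_isGrandchild hgv) hav), hp⟩

lemma realLT_transfer_left (hT : IsDelayedTree T) {t v w x xx : V}
    (hv : ¬ T.anc t v) (hw : T.isChild w t)
    (hx : T.anc w x) (hxx : T.anc w xx)
    (h : T.realLT x v) : T.realLT xx v := by
  obtain ⟨s, c, v', hgc, hgv, hne, hac, hav, hp⟩ := h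
  exact ⟨s, c, v', hgc, hgv, hne,
    anc_transfer hT hv hw hx hxx hgc hac (anc_trans (anc_of_isGrandchild hgv) hav), hav, hp⟩

/-- A leaf `v` not below `t` is `≺`-comparable to any child `w` of `t`. -/
lemma nodeLT_total_leaf [Fintype V] (hT : IsDelayedTree T) (hW : T.WellFormed)
    {t v w : V} (hvleaf : T.isLeaf v) (hv : ¬ T.anc t v) (hw : T.isChild w t) :
    T.nodeLT v w ∨ T.nodeLT w v := by
  obtain ⟨x0, hx0leaf, hx0anc⟩ := leavesBelow_nonempty hT w
  have hvx0 : v ≠ x0 := by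
    rintro rfl
    exact hv (anc_trans (anc_of_isChild hw) hx0anc)
  have hvmem : v ∈ T.leavesBelow v := ⟨hvleaf, anc_refl v⟩
  have hwne : (T.leavesBelow w).Nonempty := ⟨x0, hx0leaf, hx0anc⟩
  rcases hW.2.2 v x0 hvleaf hx0leaf hvx0 with h | h
  · left
    refine ⟨⟨v, hvmem⟩, hwne, ?_⟩
    intro a ha y hy
    rw [eq_of_mem_leavesBelow_leaf hvleaf ha]
    exact realLT_transfer_right hT hv hw hx0anc hy.2 h
  · right
    refine ⟨hwne, ⟨v, hvmem⟩, ?_⟩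
    intro y hy a ha
    rw [eq_of_mem_leavesBelow_leaf hvleaf ha]
    exact realLT_transfer_left hT hv hw hx0anc hy.2 h

end PreDTree

/-- In a well-formed delayed structured tree, indistinguishability is an
equivalence relation on the set of nodes. -/
theorem indist_equivalence {V : Type*} [Fintype V] (T : PreDTree V)
    (hT : IsDelayedTree T) (hW : T.WellFormed) : Equivalence T.Indist := by
  constructor
  · intro u
    exact Or.inl rfl
  · intro u w h
    rcases h with rfl | ⟨hs, hd⟩
    · exact Or.inl rfl
    · refine Or.inr ⟨⟨hs.1.symm, hs.2.2.1, hs.2.1, hs.2.2.2.symm⟩, ?_⟩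
      intro v hvl hvn hdist
      exact hd v hvl (by rwa [hs.2.2.2]) hdist.symm
  · intro u w z h1 h2
    rcases h1 with rfl | ⟨hs1, hd1⟩
    · exact h2
    rcases h2 with rfl | ⟨hs2, hd2⟩
    · exact Or.inr ⟨hs1, hd1⟩
    by_cases huz : u = z
    · exact Or.inl huz
    refine Or.inr ⟨⟨huz, hs1.2.1, hs2.2.2.1, hs1.2.2.2.trans hs2.2.2.2⟩, ?_⟩
    intro v hvl hvn hdist
    have hvt : ¬ T.anc (T.parent u) v := fun h => hvn ⟨hvl, h⟩
    have hwchild : T.isChild w (T.parent u) := hs1.2.2.2 ▸ hs1.2.2.1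
    have hvn' : v ∉ T.leavesBelow (T.parent w) := by rwa [← hs1.2.2.2]
    have htot := PreDTree.nodeLT_total_leaf hT hW hvl hvt hwchild
    rcases hdist with ⟨huv, hvz⟩ | ⟨hzv, hvu⟩ <;> rcases htot with hvw | hwv
    · exact hd1 v hvl hvn (Or.inl ⟨huv, hvw⟩)
    · exact hd2 v hvl hvn' (Or.inl ⟨hwv, hvz⟩)
    · exact hd2 v hvl hvn' (Or.inr ⟨hzv, hvw⟩)
    · exact hd1 v hvl hvn (Or.inr ⟨hwv, hvu⟩)
end
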